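/- arXiv:2307.12840 — 7 statements merged into one kernel-verified Lean document; each statement's English description precedes it below -/
import Mathlib

section
/- For the standard Gaussian G ~ N(0,1) and any even integer m > 1, E[ReLU(G) · h_m(G)] = h_{m-2}(0) · g(0) / √(m(m-1)), where h_m is the m-th normalized probabilist's Hermite polynomial and g is the standard Gaussian density. -/
open MeasureTheory ProbabilityTheory Polynomial Filter Real
open scoped ENNReal NNReal

noncomputable def H (k : ℕ) : ℝ[X] := (Polynomial.hermite k).map (algebraMap ℤ ℝ)

lemma H_succ (k : ℕ) : H (k + 1) = Polynomial.X * H k - Polynomial.derivative (H k) := by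
  simp [H, Polynomial.hermite_succ, Polynomial.derivative_map]

lemma aeval_eq_H (k : ℕ) (t : ℝ) :
    Polynomial.aeval t (Polynomial.hermite k) = (H k).eval t := by
  simp [H, Polynomial.aeval_def, Polynomial.eval₂_eq_eval_map]

lemma integrable_poly_gauss (p : ℝ[X]) :
    Integrable (fun t : ℝ => p.eval t * Real.exp (-(t ^ 2 / 2))) := by
  have h : ∀ n : ℕ, Integrable (fun t : ℝ => t ^ n * Real.exp (-(t ^ 2 / 2))) := by
    intro n
    have := integrable_rpow_mul_exp_neg_mul_sq (b := (1:ℝ)/2) (by norm_num)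
      (s := (n : ℝ)) (lt_of_lt_of_le neg_one_lt_zero (Nat.cast_nonneg n))
    refine this.congr (Filter.Eventually.of_forall fun x => ?_)
    simp only [Real.rpow_natCast]; ring_nf
  have := fun n => ((h n).const_mul (p.coeff n))
  have hs : Integrable (fun t : ℝ =>
      ∑ n ∈ Finset.range (p.natDegree + 1), p.coeff n * (t ^ n * Real.exp (-(t ^ 2 / 2)))) :=
    MeasureTheory.integrable_finset_sum _ fun n _ => this n
  refine hs.congr (Filter.Eventually.of_forall fun x => ?_)
  simp only [Polynomial.eval_eq_sum_range, Finset.sum_mul]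
  congr 1; ext n; ring

lemma tendsto_poly_gauss (p : ℝ[X]) :
    Tendsto (fun t : ℝ => p.eval t * Real.exp (-(t ^ 2 / 2))) atTop (nhds 0) := by
  have h : ∀ n : ℕ, Tendsto (fun t : ℝ => t ^ n * Real.exp (-(t ^ 2 / 2))) atTop (nhds 0) := by
    intro n
    have hlo := rpow_mul_exp_neg_mul_sq_isLittleO_exp_neg (b := (1:ℝ)/2) (by norm_num) (n : ℝ)
    have h1 : Tendsto (fun x : ℝ => (1/2 : ℝ) * x) atTop atTop :=
      Tendsto.const_mul_atTop (by norm_num) tendsto_id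
    have h0 : Tendsto (fun x : ℝ => Real.exp (-(1/2) * x)) atTop (nhds 0) := by
      refine (Real.tendsto_exp_atBot.comp (tendsto_neg_atTop_atBot.comp h1)).congr fun x => ?_
      simp [Function.comp, neg_mul]
    have := hlo.tendsto_zero_of_tendsto h0
    refine this.congr' ?_
    filter_upwards [Filter.eventually_ge_atTop (0:ℝ)] with x _
    simp only [Real.rpow_natCast]; ring_nf
  have hs : Tendsto (fun t : ℝ =>
      ∑ n ∈ Finset.range (p.natDegree + 1), p.coeff n * (t ^ n * Real.exp (-(t ^ 2 / 2))))
      atTop (nhds 0) := by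
    have := tendsto_finset_sum (Finset.range (p.natDegree + 1))
      (fun n _ => ((h n).const_mul (p.coeff n)))
    simpa using this
  refine hs.congr fun x => ?_
  simp only [Polynomial.eval_eq_sum_range, Finset.sum_mul]
  congr 1; ext n; ring

lemma hasDerivAt_hermite_gauss (k : ℕ) (t : ℝ) :
    HasDerivAt (fun t : ℝ => (H k).eval t * Real.exp (-(t ^ 2 / 2)))
      (-((H (k+1)).eval t * Real.exp (-(t ^ 2 / 2)))) t := by
  have hE : HasDerivAt (fun t : ℝ => Real.exp (-(t ^ 2 / 2))) (-t * Real.exp (-(t ^ 2 / 2))) t := by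
    have h1 : HasDerivAt (fun t : ℝ => -(t ^ 2 / 2)) (-t) t := by
      have := ((hasDerivAt_pow 2 t).div_const 2).fun_neg
      simpa using this
    simpa [mul_comm] using h1.exp
  have hP := (H k).hasDerivAt (𝕜 := ℝ) t
  have := hP.fun_mul hE
  refine this.congr_deriv ?_
  rw [H_succ]
  simp only [Polynomial.eval_sub, Polynomial.eval_mul, Polynomial.eval_X]
  ring

lemma key_integral (k : ℕ) :
    ∫ t in Set.Ioi (0:ℝ), t * (H (k+2)).eval t * Real.exp (-(t ^ 2 / 2)) =
      (H k).eval 0 := by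
  set f : ℝ → ℝ := fun t =>
    t * ((H (k+1)).eval t * Real.exp (-(t ^ 2 / 2))) +
      (H k).eval t * Real.exp (-(t ^ 2 / 2)) with hf
  have hderiv : ∀ x ∈ Set.Ici (0:ℝ), HasDerivAt f
      (-(x * (H (k+2)).eval x * Real.exp (-(x ^ 2 / 2)))) x := by
    intro x _
    have h1 := (hasDerivAt_id x).mul (hasDerivAt_hermite_gauss (k+1) x)
    have h2 := hasDerivAt_hermite_gauss k x
    have h3 := h1.add h2
    have heq : (1 : ℝ) * ((H (k+1)).eval x * Real.exp (-(x ^ 2 / 2))) +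
        id x * -((H (k+1+1)).eval x * Real.exp (-(x ^ 2 / 2))) +
        -((H (k+1)).eval x * Real.exp (-(x ^ 2 / 2))) =
        -(x * (H (k+2)).eval x * Real.exp (-(x ^ 2 / 2))) := by
      simp only [id]
      ring_nf
    rw [heq] at h3
    exact h3
  have hint : IntegrableOn
      (fun x : ℝ => -(x * (H (k+2)).eval x * Real.exp (-(x ^ 2 / 2))))
      (Set.Ioi 0) := by
    have := (integrable_poly_gauss (Polynomial.X * H (k+2))).neg.integrableOn
      (s := Set.Ioi (0:ℝ))
    refine this.congr_fun (fun x _ => ?_) measurableSet_Ioi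
    simp [mul_assoc]
  have htend : Tendsto f atTop (nhds 0) := by
    have := tendsto_poly_gauss (Polynomial.X * H (k+1) + H k)
    refine this.congr fun x => ?_
    simp [hf, add_mul, mul_assoc]
  have := integral_Ioi_of_hasDerivAt_of_tendsto' hderiv hint htend
  rw [integral_neg] at this
  have hf0 : f 0 = (H k).eval 0 := by simp [hf]
  rw [hf0] at this
  linarith [this]

/-- The `m`-th normalized probabilist's Hermite polynomial `h_m(t) = He_m(t)/√(m!)`. -/
noncomputable def hermiteN (m : ℕ) (t : ℝ) : ℝ :=
  (Polynomial.aeval t (Polynomial.hermite m)) / Real.sqrt (Nat.factorial m)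

/-- The standard Gaussian density `g(t) = (2π)^{-1/2} e^{-t²/2}`. -/
noncomputable def stdGaussPDF (t : ℝ) : ℝ :=
  (Real.sqrt (2 * Real.pi))⁻¹ * Real.exp (-t ^ 2 / 2)

/-- For the standard Gaussian `G ~ N(0,1)` and even `m > 1`,
`E[ReLU(G) · h_m(G)] = h_{m-2}(0) · g(0) / √(m(m-1))`. -/
theorem relu_hermite_coeff_even (m : ℕ) (hm : 1 < m) (heven : Even m) :
    ∫ t, max 0 t * hermiteN m t ∂(gaussianReal 0 1) =
      hermiteN (m - 2) 0 * stdGaussPDF 0 / Real.sqrt (m * (m - 1)) := by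
  obtain ⟨k, rfl⟩ : ∃ k, m = k + 2 := ⟨m - 2, by omega⟩
  have hpdfnn := gaussianPDFReal_nonneg (μ := 0) (v := 1)
  have h1 : ∫ t, max 0 t * hermiteN (k+2) t ∂(gaussianReal 0 1)
      = ∫ t, gaussianPDFReal 0 1 t * (max 0 t * hermiteN (k+2) t) := by
    rw [gaussianReal_of_var_ne_zero 0 one_ne_zero]
    have hmeas : Measurable fun x => (gaussianPDFReal 0 1 x).toNNReal :=
      (measurable_gaussianPDFReal 0 1).real_toNNReal
    rw [show gaussianPDF 0 1 = fun x => ((gaussianPDFReal 0 1 x).toNNReal : ℝ≥0∞) from rfl]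
    rw [integral_withDensity_eq_integral_smul hmeas]
    congr 1; ext t
    simp [NNReal.smul_def, Real.coe_toNNReal _ (hpdfnn t)]
  have hpdf : ∀ t : ℝ, gaussianPDFReal 0 1 t
      = (Real.sqrt (2 * Real.pi))⁻¹ * Real.exp (-(t ^ 2 / 2)) := by
    intro t
    simp [gaussianPDFReal]
    left; ring
  have h2 : ∀ t : ℝ, gaussianPDFReal 0 1 t * (max 0 t * hermiteN (k+2) t)
      = ((Real.sqrt (2 * Real.pi))⁻¹ * (Real.sqrt (Nat.factorial (k+2) : ℝ))⁻¹) *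
        (max 0 t * (H (k+2)).eval t * Real.exp (-(t ^ 2 / 2))) := by
    intro t
    rw [hpdf t, hermiteN, aeval_eq_H, div_eq_mul_inv]
    ring
  have h3 : ∫ t : ℝ, max 0 t * (H (k+2)).eval t * Real.exp (-(t ^ 2 / 2))
      = (H k).eval 0 := by
    rw [← MeasureTheory.setIntegral_eq_integral_of_forall_compl_eq_zero
      (s := Set.Ioi (0:ℝ)) (fun x hx => by
        have hx0 : x ≤ 0 := by simpa using hx
        simp [max_eq_left hx0])]
    rw [MeasureTheory.setIntegral_congr_fun measurableSet_Ioi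
      (g := fun t => t * (H (k+2)).eval t * Real.exp (-(t ^ 2 / 2)))
      (fun x hx => by simp [max_eq_right (le_of_lt (Set.mem_Ioi.mp hx))])]
    exact key_integral k
  rw [h1]
  simp_rw [h2]
  rw [MeasureTheory.integral_const_mul, h3]
  -- now pure algebra
  have hk2 : (k + 2 - 2 : ℕ) = k := by omega
  rw [hk2, hermiteN, aeval_eq_H, stdGaussPDF]
  have he0 : Real.exp (-(0:ℝ) ^ 2 / 2) = 1 := by norm_num
  rw [he0, mul_one]
  have hcast : ((k + 2 : ℕ) : ℝ) * (((k + 2 : ℕ) : ℝ) - 1) = ((k:ℝ)+2) * ((k:ℝ)+1) := by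
    push_cast; ring
  rw [hcast]
  have hfac : Real.sqrt ((Nat.factorial (k+2) : ℕ) : ℝ)
      = Real.sqrt (((k:ℝ)+2) * ((k:ℝ)+1)) * Real.sqrt ((Nat.factorial k : ℕ) : ℝ) := by
    rw [← Real.sqrt_mul (by positivity)]
    congr 1
    push_cast [Nat.factorial_succ]
    ring
  rw [hfac]
  have h2pi : Real.sqrt (2 * Real.pi) ≠ 0 := by positivity
  have hfk : Real.sqrt ((Nat.factorial k : ℕ) : ℝ) ≠ 0 := by positivity
  have hkk : Real.sqrt (((k:ℝ)+2) * ((k:ℝ)+1)) ≠ 0 := by positivity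
  field_simp
end

section
/- For every integer m ≥ 2, E[ReLU(G) h_m(G)] = h_{m-2}(0) g(0) / √(m(m-1)), where G ~ N(0,1), h_j is the j-th normalized probabilist's Hermite polynomial, and g is the standard Gaussian density. -/
open MeasureTheory ProbabilityTheory

/-!
Differentiating, `(He_n(t) e^{-t²/2})' = -He_{n+1}(t) e^{-t²/2}`, so
`-(t He_{k+1}(t) + He_k(t)) e^{-t²/2}` is an antiderivative of `t He_{k+2}(t) e^{-t²/2}` that
vanishes at infinity. Hence `∫₀^∞ t He_{k+2}(t) e^{-t²/2} dt = He_k(0)`, and normalising with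
`(k+2)! = (k+2)(k+1) k!` gives the claim.
-/

open Polynomial Real Filter Topology Set

section PolynomialTimesGaussian

variable {R : Type*} [CommSemiring R] [Algebra R ℝ]

lemma tendsto_pow_mul_exp_neg_sq_div_two_atTop (n : ℕ) :
    Tendsto (fun x : ℝ => x ^ n * exp (-x ^ 2 / 2)) atTop (𝓝 0) := by
  have hexp : Tendsto (fun x : ℝ => exp (-(1 / 2) * x)) atTop (𝓝 0) :=
    tendsto_exp_atBot.comp (tendsto_id.const_mul_atTop_of_neg (by norm_num))
  have h :=
    (rpow_mul_exp_neg_mul_sq_isLittleO_exp_neg one_half_pos (n : ℝ)).tendsto_zero_of_tendsto hexp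
  simpa [neg_div, div_eq_inv_mul] using h

lemma integrable_pow_mul_exp_neg_sq_div_two (n : ℕ) :
    Integrable (fun x : ℝ => x ^ n * exp (-x ^ 2 / 2)) := by
  have h := integrable_rpow_mul_exp_neg_mul_sq one_half_pos
    (neg_one_lt_zero.trans_le (Nat.cast_nonneg n))
  simpa [neg_div, div_eq_inv_mul] using h

lemma tendsto_aeval_mul_exp_neg_sq_div_two_atTop (p : R[X]) :
    Tendsto (fun x : ℝ => aeval x p * exp (-x ^ 2 / 2)) atTop (𝓝 0) := by
  induction p using Polynomial.induction_on' with
  | add p q hp hq => simpa [add_mul] using hp.add hq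
  | monomial n a =>
    simpa [mul_assoc] using
      (tendsto_pow_mul_exp_neg_sq_div_two_atTop n).const_mul (algebraMap R ℝ a)

lemma integrable_aeval_mul_exp_neg_sq_div_two (p : R[X]) :
    Integrable (fun x : ℝ => aeval x p * exp (-x ^ 2 / 2)) := by
  induction p using Polynomial.induction_on' with
  | add p q hp hq =>
    simp only [map_add, add_mul]
    exact hp.add hq
  | monomial n a =>
    simpa [mul_assoc] using (integrable_pow_mul_exp_neg_sq_div_two n).const_mul (algebraMap R ℝ a)

end PolynomialTimesGaussian

lemma hasDerivAt_aeval_hermite_mul_exp (n : ℕ) (x : ℝ) :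
    HasDerivAt (fun t => aeval t (hermite n) * exp (-t ^ 2 / 2))
      (-(aeval x (hermite (n + 1)) * exp (-x ^ 2 / 2))) x := by
  have hexp : HasDerivAt (fun t : ℝ => exp (-t ^ 2 / 2)) (-x * exp (-x ^ 2 / 2)) x := by
    simpa [mul_comm, neg_div] using (((hasDerivAt_pow 2 x).div_const 2).neg).exp
  refine (((hermite n).hasDerivAt_aeval x).mul hexp).congr_deriv ?_
  rw [hermite_succ, map_sub, map_mul, aeval_X]
  ring

lemma hasDerivAt_neg_aeval_hermite_mul_exp (k : ℕ) (x : ℝ) :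
    HasDerivAt (fun t => -(aeval t (X * hermite (k + 1) + hermite k) * exp (-t ^ 2 / 2)))
      (x * aeval x (hermite (k + 2)) * exp (-x ^ 2 / 2)) x := by
  simp only [map_add, map_mul, aeval_X, add_mul, mul_assoc]
  refine (((hasDerivAt_id x).mul (hasDerivAt_aeval_hermite_mul_exp (k + 1) x)).add
    (hasDerivAt_aeval_hermite_mul_exp k x)).neg.congr_deriv ?_
  simp only [id]
  ring

lemma integral_Ioi_mul_aeval_hermite_mul_exp (k : ℕ) :
    ∫ t in Ioi (0 : ℝ), t * aeval t (hermite (k + 2)) * exp (-t ^ 2 / 2) =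
      aeval 0 (hermite k) := by
  have hint :
      IntegrableOn (fun t : ℝ => t * aeval t (hermite (k + 2)) * exp (-t ^ 2 / 2)) (Ioi 0) := by
    have h :=
      (integrable_aeval_mul_exp_neg_sq_div_two (X * hermite (k + 2))).integrableOn (s := Ioi 0)
    simpa only [map_mul, aeval_X] using h
  have htend := (tendsto_aeval_mul_exp_neg_sq_div_two_atTop (X * hermite (k + 1) + hermite k)).neg
  rw [integral_Ioi_of_hasDerivAt_of_tendsto' (fun x _ => hasDerivAt_neg_aeval_hermite_mul_exp k x)
    hint (by simpa using htend)]
  simp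

lemma integral_max_zero_mul_gaussianReal {μ : ℝ} {v : NNReal} (hv : v ≠ 0) (f : ℝ → ℝ) :
    ∫ t, max 0 t * f t ∂gaussianReal μ v =
      ∫ t in Ioi 0, gaussianPDFReal μ v t * (t * f t) := by
  rw [integral_gaussianReal_eq_integral_smul hv,
    ← setIntegral_eq_integral_of_forall_compl_eq_zero (s := Ioi 0)
      fun t ht => by rw [max_eq_left (not_lt.mp ht), zero_mul, smul_zero]]
  exact setIntegral_congr_fun measurableSet_Ioi fun t ht => by
    rw [max_eq_right (le_of_lt ht), smul_eq_mul]

lemma gaussianPDFReal_zero_one : gaussianPDFReal 0 1 = stdGaussPDF := by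
  ext t
  simp [gaussianPDFReal, stdGaussPDF]

lemma stdGaussPDF_eq_mul_exp (t : ℝ) : stdGaussPDF t = stdGaussPDF 0 * exp (-t ^ 2 / 2) := by
  simp [stdGaussPDF]

lemma sqrt_factorial_add_two (k : ℕ) :
    √((k + 2).factorial : ℝ) =
      √(((k + 2 : ℕ) : ℝ) * ((k + 2 : ℕ) - 1)) * √(k.factorial : ℝ) := by
  rw [← Real.sqrt_mul' _ (Nat.cast_nonneg _), Nat.factorial_succ, Nat.factorial_succ]
  push_cast
  ring_nf

/-- For the standard Gaussian `G ~ N(0,1)` and any `m ≥ 2`,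
`E[ReLU(G) · h_m(G)] = h_{m-2}(0) · g(0) / √(m(m-1))`. -/
theorem relu_hermite_coeff_ge_two (m : ℕ) (hm : 2 ≤ m) :
    ∫ t, max 0 t * hermiteN m t ∂(gaussianReal 0 1) =
      hermiteN (m - 2) 0 * stdGaussPDF 0 / Real.sqrt (m * (m - 1)) := by
  obtain ⟨k, rfl⟩ := Nat.exists_eq_add_of_le' hm
  have hintegrand : ∀ t, stdGaussPDF t * (t * hermiteN (k + 2) t) =
      stdGaussPDF 0 / √((k + 2).factorial : ℝ) *
        (t * aeval t (hermite (k + 2)) * exp (-t ^ 2 / 2)) := by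
    intro t
    rw [stdGaussPDF_eq_mul_exp, hermiteN]
    ring
  simp_rw [integral_max_zero_mul_gaussianReal one_ne_zero, gaussianPDFReal_zero_one, hintegrand,
    integral_const_mul, integral_Ioi_mul_aeval_hermite_mul_exp, Nat.add_sub_cancel, hermiteN,
    sqrt_factorial_add_two]
  have hk_fact : √(k.factorial : ℝ) ≠ 0 := Real.sqrt_ne_zero'.mpr (by positivity)
  have hk_pos : √(((k + 2 : ℕ) : ℝ) * ((k + 2 : ℕ) - 1)) ≠ 0 :=
    Real.sqrt_ne_zero'.mpr (by push_cast; nlinarith)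
  field_simp
end

section
/- The coefficients c_m = E[ReLU(G) h_m(G)] satisfy |c_m| = Θ(m^{-5/4}) along even m: there exist constants 0 < a ≤ b such that for all even m ≥ 2, a·m^{-5/4} ≤ |c_m| ≤ b·m^{-5/4}. -/
open MeasureTheory ProbabilityTheory

/-- `c_m = E_{G ~ N(0,1)}[ReLU(G) h_m(G)]`. -/
noncomputable def reluCoeff (m : ℕ) : ℝ :=
  ∫ t, max 0 t * hermiteN m t ∂(gaussianReal 0 1)

/-!
Write `φ(t) = exp(-t²/2)`. The Hermite recursion `He_{n+1} = X He_n - He_n'` says exactly that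
`(He_n φ)' = -He_{n+1} φ`, hence `-(He_k + t He_{k+1}) φ` is an antiderivative of `t He_{k+2} φ`
and `c_{k+2} = He_k(0) / √(2π (k+2)!)`. With `He_{2n}(0) = (-1)ⁿ (2n-1)‼` this gives
`c_{2n+2}² = binom(2n,n) 4⁻ⁿ / (2π (2n+1)(2n+2))`, and the elementary bounds
`1/(4n+1) ≤ (binom(2n,n) 4⁻ⁿ)² ≤ 1/(2n+1)` (induction on `n`) pin `c_m⁴ m⁵` between `1/81`
and `1`.
-/

open Polynomial Filter Real Set Topology
open scoped Nat

section PolynomialGaussian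

variable {R : Type*} [CommSemiring R] [Algebra R ℝ] {b : ℝ}

theorem Polynomial.tendsto_aeval_mul_exp_neg_mul_sq_atTop (hb : 0 < b) (p : R[X]) :
    Tendsto (fun t : ℝ => aeval t p * exp (-b * t ^ 2)) atTop (𝓝 0) := by
  induction p using Polynomial.induction_on' with
  | add p q hp hq => simpa only [map_add, add_mul, add_zero] using hp.add hq
  | monomial n a =>
    have h := (tendsto_rpow_abs_mul_exp_neg_mul_sq_cocompact hb n).mono_left atTop_le_cocompact
    rw [tendsto_zero_iff_norm_tendsto_zero]
    simpa [aeval_monomial, abs_mul, mul_assoc, abs_of_pos (exp_pos _)] using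
      h.const_mul ‖algebraMap R ℝ a‖

theorem Polynomial.integrable_aeval_mul_exp_neg_mul_sq (hb : 0 < b) (p : R[X]) :
    Integrable (fun t : ℝ => aeval t p * exp (-b * t ^ 2)) := by
  induction p using Polynomial.induction_on' with
  | add p q hp hq => simp only [map_add, add_mul]; exact hp.add hq
  | monomial n a =>
    have h :=
      integrable_rpow_mul_exp_neg_mul_sq hb (s := n) (neg_one_lt_zero.trans_le n.cast_nonneg)
    simpa only [aeval_monomial, mul_assoc, rpow_natCast] using h.const_mul (algebraMap R ℝ a)

end PolynomialGaussian

theorem Polynomial.hasDerivAt_aeval_hermite_mul_gaussian (n : ℕ) (t : ℝ) :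
    HasDerivAt (fun t : ℝ => aeval t (hermite n) * exp (-(t ^ 2 / 2)))
      (-(aeval t (hermite (n + 1)) * exp (-(t ^ 2 / 2)))) t := by
  have hφ : HasDerivAt (fun t : ℝ => exp (-(t ^ 2 / 2))) (-t * exp (-(t ^ 2 / 2))) t := by
    simpa [mul_comm] using (((hasDerivAt_pow 2 t).div_const 2).fun_neg).exp
  refine ((Polynomial.hasDerivAt_aeval (hermite n) t).mul hφ).congr_deriv ?_
  rw [hermite_succ, map_sub, map_mul, aeval_X]
  ring

theorem Polynomial.integral_Ioi_mul_aeval_hermite_mul_gaussian (k : ℕ) :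
    ∫ t in Ioi (0 : ℝ), t * aeval t (hermite (k + 2)) * exp (-(t ^ 2 / 2)) =
      aeval (0 : ℝ) (hermite k) := by
  have hF : ∀ t ∈ Ici (0 : ℝ), HasDerivAt
      (fun t => -(aeval t (hermite k) * exp (-(t ^ 2 / 2)) +
        t * (aeval t (hermite (k + 1)) * exp (-(t ^ 2 / 2)))))
      (t * aeval t (hermite (k + 2)) * exp (-(t ^ 2 / 2))) t := fun t _ =>
    ((hasDerivAt_aeval_hermite_mul_gaussian k t).fun_add
      ((hasDerivAt_id' t).fun_mul (hasDerivAt_aeval_hermite_mul_gaussian (k + 1) t))).fun_neg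
      |>.congr_deriv (by ring)
  have hgauss : ∀ t : ℝ, -(1 / 2) * t ^ 2 = -(t ^ 2 / 2) := fun t => by ring
  have hint := (integrable_aeval_mul_exp_neg_mul_sq (by norm_num : (0 : ℝ) < 1 / 2)
    (X * hermite (k + 2))).integrableOn (s := Ioi 0)
  have hlim := (tendsto_aeval_mul_exp_neg_mul_sq_atTop (by norm_num : (0 : ℝ) < 1 / 2)
    (hermite k + X * hermite (k + 1))).neg
  simp only [hgauss, map_mul, aeval_X] at hint
  simp only [hgauss, map_add, map_mul, aeval_X, add_mul, mul_assoc, neg_zero] at hlim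
  rw [integral_Ioi_of_hasDerivAt_of_tendsto' hF hint hlim]
  simp

theorem Polynomial.aeval_zero_hermite_two_mul (n : ℕ) :
    aeval (0 : ℝ) (hermite (2 * n)) = (-1) ^ n * (2 * n - 1)‼ := by
  rw [aeval_def, eval₂_at_zero, ← add_zero (2 * n), coeff_hermite_explicit n 0]
  simp

theorem Nat.factorial_two_mul (n : ℕ) : (2 * n)! = 2 ^ n * n ! * (2 * n - 1)‼ := by
  cases n with
  | zero => rfl
  | succ n =>
    rw [show 2 * (n + 1) = 2 * n + 1 + 1 by ring, factorial_eq_mul_doubleFactorial,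
      show 2 * n + 1 + 1 = 2 * (n + 1) by ring, doubleFactorial_two_mul,
      show 2 * (n + 1) - 1 = 2 * n + 1 by omega]

theorem Nat.doubleFactorial_two_mul_sub_one_sq_mul_four_pow (n : ℕ) :
    (2 * n - 1)‼ ^ 2 * 4 ^ n = centralBinom n * (2 * n)! := by
  have hbinom : centralBinom n * n ! * n ! = (2 * n)! := by
    simpa [centralBinom, show 2 * n - n = n by omega] using
      choose_mul_factorial_mul_factorial (show n ≤ 2 * n by omega)
  apply Nat.eq_of_mul_eq_mul_right (pow_pos (factorial_pos n) 2)
  calc (2 * n - 1)‼ ^ 2 * 4 ^ n * n ! ^ 2 = (2 ^ n * n ! * (2 * n - 1)‼) ^ 2 := by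
        rw [show 4 ^ n = 2 ^ n * 2 ^ n by rw [← mul_pow]; rfl]; ring
    _ = centralBinom n * (2 * n)! * n ! ^ 2 := by
        rw [← factorial_two_mul, ← hbinom]; ring

theorem Nat.centralBinom_sq_mul_le (n : ℕ) : centralBinom n ^ 2 * (2 * n + 1) ≤ 16 ^ n := by
  induction n with
  | zero => simp
  | succ n ih =>
    refine le_of_mul_le_mul_left ?_ (pow_pos n.succ_pos 2)
    calc (n + 1) ^ 2 * (centralBinom (n + 1) ^ 2 * (2 * (n + 1) + 1))
        = ((n + 1) * centralBinom (n + 1)) ^ 2 * (2 * n + 3) := by ring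
      _ = 4 * (2 * n + 1) * (2 * n + 3) * (centralBinom n ^ 2 * (2 * n + 1)) := by
          rw [succ_mul_centralBinom_succ]; ring
      _ ≤ 4 * (2 * n + 1) * (2 * n + 3) * 16 ^ n := by gcongr
      _ ≤ 16 * (n + 1) ^ 2 * 16 ^ n := Nat.mul_le_mul_right _ (by nlinarith)
      _ = (n + 1) ^ 2 * 16 ^ (n + 1) := by ring

theorem Nat.le_centralBinom_sq_mul (n : ℕ) : 16 ^ n ≤ centralBinom n ^ 2 * (4 * n + 1) := by
  induction n with
  | zero => simp
  | succ n ih =>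
    refine le_of_mul_le_mul_left ?_ (pow_pos n.succ_pos 2)
    calc (n + 1) ^ 2 * 16 ^ (n + 1) = 16 * (n + 1) ^ 2 * 16 ^ n := by ring
      _ ≤ 16 * (n + 1) ^ 2 * (centralBinom n ^ 2 * (4 * n + 1)) := by gcongr
      _ = 16 * (n + 1) ^ 2 * (4 * n + 1) * centralBinom n ^ 2 := by ring
      _ ≤ 4 * (2 * n + 1) ^ 2 * (4 * n + 5) * centralBinom n ^ 2 :=
          Nat.mul_le_mul_right _ (by nlinarith)
      _ = ((n + 1) * centralBinom (n + 1)) ^ 2 * (4 * n + 5) := by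
          rw [succ_mul_centralBinom_succ]; ring
      _ = (n + 1) ^ 2 * (centralBinom (n + 1) ^ 2 * (4 * (n + 1) + 1)) := by ring

section RpowNeg

variable {a x M r : ℝ} {j k : ℕ}

theorem Real.mul_rpow_neg_pow (hr : r * k = j) (hM : 0 ≤ M) :
    (a * M ^ (-r)) ^ k = a ^ k / M ^ j := by
  rw [mul_pow, ← rpow_mul_natCast hM, neg_mul, hr, rpow_neg hM, rpow_natCast, div_eq_mul_inv]

theorem Real.mul_rpow_neg_le_iff (hk : k ≠ 0) (hr : r * k = j) (ha : 0 ≤ a) (hx : 0 ≤ x)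
    (hM : 0 < M) : a * M ^ (-r) ≤ x ↔ a ^ k ≤ x ^ k * M ^ j := by
  rw [← pow_le_pow_iff_left₀ (by positivity) hx hk, mul_rpow_neg_pow hr hM.le,
    div_le_iff₀ (by positivity)]

theorem Real.le_mul_rpow_neg_iff (hk : k ≠ 0) (hr : r * k = j) (ha : 0 ≤ a) (hx : 0 ≤ x)
    (hM : 0 < M) : x ≤ a * M ^ (-r) ↔ x ^ k * M ^ j ≤ a ^ k := by
  rw [← pow_le_pow_iff_left₀ hx (by positivity) hk, mul_rpow_neg_pow hr hM.le,
    le_div_iff₀ (by positivity)]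

end RpowNeg

theorem reluCoeff_eq_integral_Ioi (m : ℕ) :
    reluCoeff m = (√(2 * π) * √(m ! : ℝ))⁻¹ *
      ∫ t in Ioi (0 : ℝ), t * aeval t (hermite m) * exp (-(t ^ 2 / 2)) := by
  rw [reluCoeff, integral_gaussianReal_eq_integral_smul one_ne_zero, ← integral_const_mul,
    ← integral_indicator measurableSet_Ioi]
  congr 1 with t
  rcases le_or_gt t 0 with ht | ht
  · rw [indicator_of_notMem (notMem_Ioi.mpr ht)]
    simp [max_eq_left ht]
  · rw [indicator_of_mem (mem_Ioi.mpr ht)]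
    simp only [gaussianPDFReal, hermiteN, smul_eq_mul, max_eq_right ht.le, sub_zero,
      NNReal.coe_one, mul_one]
    field_simp

theorem reluCoeff_add_two (k : ℕ) :
    reluCoeff (k + 2) = aeval (0 : ℝ) (hermite k) / (√(2 * π) * √((k + 2)! : ℝ)) := by
  rw [reluCoeff_eq_integral_Ioi, integral_Ioi_mul_aeval_hermite_mul_gaussian, inv_mul_eq_div]

theorem reluCoeff_two_mul_add_two_sq (n : ℕ) :
    reluCoeff (2 * n + 2) ^ 2 =
      Nat.centralBinom n / (4 ^ n * (2 * π * (2 * n + 1) * (2 * n + 2))) := by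
  have hdfac : ((2 * n - 1)‼ : ℝ) ^ 2 * 4 ^ n = Nat.centralBinom n * (2 * n)! := by
    exact_mod_cast Nat.doubleFactorial_two_mul_sub_one_sq_mul_four_pow n
  have hfac : ((2 * n + 2)! : ℝ) = (2 * n + 2) * (2 * n + 1) * (2 * n)! := by
    push_cast [Nat.factorial_succ]; ring
  rw [reluCoeff_add_two, aeval_zero_hermite_two_mul, div_pow, mul_pow, mul_pow,
    sq_sqrt (by positivity), sq_sqrt (by positivity), ← pow_mul, pow_mul', neg_one_sq, one_pow,
    one_mul, hfac, div_eq_div_iff (by positivity) (by positivity)]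
  linear_combination (2 * π * (2 * n + 1) * (2 * n + 2)) * hdfac

theorem reluCoeff_two_mul_add_two_pow_four_mul_pow_five_mem_Icc (n : ℕ) :
    reluCoeff (2 * n + 2) ^ 4 * (2 * n + 2 : ℝ) ^ 5 ∈ Icc (1 / 81) 1 := by
  have hupper : (Nat.centralBinom n : ℝ) ^ 2 * (2 * n + 1) ≤ 16 ^ n := by
    exact_mod_cast Nat.centralBinom_sq_mul_le n
  have hlower : (16 : ℝ) ^ n ≤ Nat.centralBinom n ^ 2 * (4 * n + 1) := by
    exact_mod_cast Nat.le_centralBinom_sq_mul n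
  have hc : reluCoeff (2 * n + 2) ^ 4 * (2 * n + 2 : ℝ) ^ 5 =
      Nat.centralBinom n ^ 2 * (2 * n + 2) ^ 3 / (16 ^ n * (4 * π ^ 2 * (2 * n + 1) ^ 2)) := by
    rw [show reluCoeff (2 * n + 2) ^ 4 = (reluCoeff (2 * n + 2) ^ 2) ^ 2 by ring,
      reluCoeff_two_mul_add_two_sq,
      show (16 : ℝ) ^ n = (4 ^ n) ^ 2 by rw [← pow_mul, mul_comm, pow_mul]; norm_num]
    field_simp
    ring
  have hπ : 9 < π ^ 2 ∧ π ^ 2 < 10 := by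
    constructor <;> nlinarith [pi_gt_three, pi_lt_d2]
  rw [hc, mem_Icc, le_div_iff₀ (by positivity), div_le_one (by positivity)]
  set C : ℝ := (Nat.centralBinom n : ℝ)
  constructor
  · calc 1 / 81 * (16 ^ n * (4 * π ^ 2 * (2 * n + 1) ^ 2))
        ≤ 1 / 81 * (C ^ 2 * (4 * n + 1) * (40 * (2 * n + 1) ^ 2)) := by gcongr; linarith
      _ = C ^ 2 * (40 * (4 * n + 1) * (2 * n + 1) ^ 2 / 81) := by ring
      _ ≤ C ^ 2 * (2 * n + 2) ^ 3 := by gcongr; nlinarith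
  · calc C ^ 2 * (2 * n + 2) ^ 3 ≤ C ^ 2 * (2 * n + 1) * (8 * (2 * n + 1) ^ 2) := by
          rw [mul_assoc]; gcongr; nlinarith
      _ ≤ 16 ^ n * (4 * π ^ 2 * (2 * n + 1) ^ 2) := by gcongr; linarith

/-- `|c_m| = Θ(m^{-5/4})` along even `m ≥ 2`. -/
theorem reluCoeff_theta :
    ∃ a b : ℝ, 0 < a ∧ a ≤ b ∧ ∀ m : ℕ, 2 ≤ m → Even m →
      a * (m : ℝ) ^ (-(5 / 4 : ℝ)) ≤ |reluCoeff m| ∧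
      |reluCoeff m| ≤ b * (m : ℝ) ^ (-(5 / 4 : ℝ)) := by
  refine ⟨1 / 3, 1, by norm_num, by norm_num, fun m hm hmeven => ?_⟩
  obtain ⟨n, rfl⟩ : ∃ n, m = 2 * n + 2 := ⟨m / 2 - 1, by grind⟩
  have hr : (5 / 4 : ℝ) * (4 : ℕ) = (5 : ℕ) := by norm_num
  have hpos : (0 : ℝ) < (2 * n + 2 : ℕ) := by positivity
  rw [Real.mul_rpow_neg_le_iff four_ne_zero hr (by norm_num) (abs_nonneg _) hpos,
    Real.le_mul_rpow_neg_iff four_ne_zero hr zero_le_one (abs_nonneg _) hpos,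
    (by decide : Even 4).pow_abs]
  norm_num
  exact reluCoeff_two_mul_add_two_pow_four_mul_pow_five_mem_Icc n
end

section
/- If V is a subspace of an inner product space W, then for every k and every x ∈ W, H_k^{(V)}(Proj_V(x)) = Proj_V^{⊗k} H_k^{(W)}(x), where H_k^{(U)} denotes the k-th normalized Hermite tensor over the space U and Proj_V^{⊗k} applies the orthogonal projection onto V in each tensor coordinate. -/
/-! Write `H_k` as a sum over pairings `f` of products with one factor per block: `x` at a
singleton, the form `-I` at a pair. Applying a matrix `B` in every tensor slot factorises over
the blocks, turning `x` into `B x` and `-I` into `-B Bᵀ`. For `B = (⟪b t, e s⟫)` the rows are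
orthonormal, so `B Bᵀ = I`, while `B x` is the coordinate vector of `Proj_V x`. -/

open MeasureTheory

/-- The entries of the `k`-th normalized Hermite tensor, expressed in coordinates with
respect to an orthonormal basis of the underlying space:
`(H_k(x))_{i_1,…,i_k} = (1/√(k!)) Σ_{partitions P of [k] into singletons and pairs}`
`⊗_{{a,b} ∈ P} (−I_{i_a,i_b}) ⊗_{{c} ∈ P} x_{i_c}` (the identity is the Kronecker delta in
orthonormal coordinates).  Partitions are encoded as involutions `f : Fin k → Fin k`. -/
noncomputable def hermiteTensor (d k : ℕ) (x : Fin d → ℝ) (i : Fin k → Fin d) : ℝ :=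
  (Real.sqrt (Nat.factorial k))⁻¹ *
    ∑ f ∈ Finset.univ.filter (fun f : Fin k → Fin k => ∀ a, f (f a) = a),
      ∏ a, (if f a = a then x (i a)
            else if a < f a then (if i a = i (f a) then (-1 : ℝ) else 0) else 1)

open Function

section Involution

variable {α R : Type*} [Fintype α] [LinearOrder α] [CommSemiring R] {f : α → α}

theorem Fintype.prod_ite_fixed_lt_eq_mul (f : α → α) (A P : α → R) :
    ∏ a, (if f a = a then A a else if f a < a then P a else 1) =
      (∏ a : {a // f a < a}, P a) * ∏ b : {b // ¬ f b < b}, if f b = b then A b else 1 := by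
  rw [← Fintype.prod_subtype_mul_prod_subtype (fun a => f a < a)]
  congr 1
  · exact Finset.prod_congr rfl fun a _ => by rw [if_neg a.2.ne, if_pos a.2]
  · exact Finset.prod_congr rfl fun b _ => by simp only [if_neg b.2]

theorem Function.Involutive.prod_subtype_lt_eq_prod_partner (hf : Involutive f) (φ : α → R) :
    ∏ a : {a // f a < a}, φ a = ∏ b : {b // ¬ f b < b}, if f b = b then 1 else φ (f b) := by
  rw [← Finset.prod_subtype (Finset.univ.filter fun a => f a < a) (by simp),
    ← Finset.prod_subtype (Finset.univ.filter fun b => ¬ f b < b) (by simp)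
      (fun b => if f b = b then 1 else φ (f b)), Finset.prod_ite,
    Finset.prod_const_one, one_mul, Finset.filter_filter]
  refine Finset.prod_nbij' f f ?_ ?_ (fun a _ => hf a) (fun a _ => hf a)
    (fun a _ => by rw [hf])
  · intro a ha
    simp only [Finset.mem_filter, Finset.mem_univ, true_and] at ha ⊢
    rw [hf]
    exact ⟨not_lt.2 ha.le, ha.ne'⟩
  · intro b hb
    simp only [Finset.mem_filter, Finset.mem_univ, true_and] at hb ⊢
    rw [hf]
    exact lt_of_le_of_ne (not_lt.1 hb.1) (Ne.symm hb.2)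

theorem Function.Involutive.prod_ite_lt_eq_prod_ite_gt (hf : Involutive f) (A P : α → R) :
    ∏ a, (if f a = a then A a else if a < f a then P a else 1) =
      ∏ a, (if f a = a then A a else if f a < a then P (f a) else 1) := by
  rw [← Equiv.prod_comp hf.toPerm]
  refine Finset.prod_congr rfl fun a _ => ?_
  by_cases ha : f a = a
  · simp [ha]
  · simp [hf a, ha, Ne.symm ha]

theorem Function.Involutive.prod_eq_prod_pairs (hf : Involutive f) (φ : α → R) :
    ∏ a, φ a = ∏ a, (if f a = a then φ a else if f a < a then φ (f a) * φ a else 1) := by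
  have lower : ∏ a, (if f a = a then 1 else if a < f a then φ a else 1) =
      ∏ a, (if f a = a then 1 else if f a < a then φ (f a) else 1) :=
    hf.prod_ite_lt_eq_prod_ite_gt 1 φ
  calc ∏ a, φ a = (∏ a, (if f a = a then φ a else if f a < a then φ a else 1)) *
        ∏ a, (if f a = a then 1 else if a < f a then φ a else 1) := by
        rw [← Finset.prod_mul_distrib]
        refine Finset.prod_congr rfl fun a _ => ?_
        rcases lt_trichotomy (f a) a with h | h | h
        · simp [h.ne, h, h.not_gt]
        · simp [h]
        · simp [h.ne', h, h.not_gt]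
    _ = _ := by
        rw [lower, ← Finset.prod_mul_distrib]
        refine Finset.prod_congr rfl fun a _ => ?_
        split_ifs <;> ring

variable {β : Type*} [Fintype β]

theorem Function.Involutive.sum_prod_pairs (hf : Involutive f) (g : α → β → R)
    (G : α → β → β → R) :
    ∑ i : α → β,
        ∏ a, (if f a = a then g a (i a) else if f a < a then G a (i (f a)) (i a) else 1) =
      ∏ a, (if f a = a then ∑ s, g a s else if f a < a then ∑ s, ∑ s', G a s s' else 1) := by
  have partner_lower (a : α) (h : f a < a) : ¬ f (f a) < f a := by
    rw [hf a]; exact not_lt.2 h.le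
  set E := Equiv.piEquivPiSubtypeProd (fun a => f a < a) (fun _ => β)
  set blockSum : {b // ¬ f b < b} → β → R := fun b s =>
    if f b = b then g b s else ∑ s', G (f b) s s'
  -- Split `i` into its values `v` at the larger elements of pairs and `u` elsewhere: summing out
  -- `v` leaves a product with one factor per coordinate of `u`.
  calc _ = ∑ u : {b // ¬ f b < b} → β, ∑ v : {a // f a < a} → β,
          (∏ a : {a // f a < a}, G a (E.symm (v, u) (f a)) (E.symm (v, u) a)) *
            ∏ b : {b // ¬ f b < b}, if f b = b then g b (E.symm (v, u) b) else 1 := by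
        simp only [Fintype.prod_ite_fixed_lt_eq_mul]
        rw [← E.symm.sum_comp, Fintype.sum_prod_type_right]
    _ = ∑ u : {b // ¬ f b < b} → β, ∏ b, blockSum b (u b) := by
        refine Finset.sum_congr rfl fun u _ => ?_
        have eval_upper (v) (a : {a // f a < a}) : E.symm (v, u) a = v a := by simp [E, a.2]
        have eval_lower (v) (b : {b // ¬ f b < b}) : E.symm (v, u) b = u b := by simp [E, b.2]
        have eval_partner (v) (a : {a // f a < a}) :
            E.symm (v, u) (f a) = u ⟨f a, partner_lower a a.2⟩ := by
          simp [E, partner_lower a a.2]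
        simp only [eval_upper, eval_lower, eval_partner, ← Finset.sum_mul, ← Fintype.prod_sum]
        set partnerSum : α → R := fun a =>
          if h : f a < a then ∑ s', G a (u ⟨f a, partner_lower a h⟩) s' else 1
        rw [Finset.prod_congr rfl fun (a : {a // f a < a}) _ =>
            (dif_pos a.2 : partnerSum a = _).symm,
          hf.prod_subtype_lt_eq_prod_partner partnerSum, ← Finset.prod_mul_distrib]
        refine Finset.prod_congr rfl fun b _ => ?_
        by_cases hb : f b = b
        · simp [blockSum, hb]
        · have hlt : (b : α) < f b := lt_of_le_of_ne (not_lt.1 b.2) (Ne.symm hb)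
          simp [blockSum, hb, partnerSum, hf b, hlt.not_ge]
    _ = ∏ b, ∑ s, blockSum b s := (Fintype.prod_sum blockSum).symm
    _ = _ := by
        rw [Fintype.prod_ite_fixed_lt_eq_mul,
          hf.prod_subtype_lt_eq_prod_partner fun a => ∑ s, ∑ s', G a s s',
          ← Finset.prod_mul_distrib]
        refine Finset.prod_congr rfl fun b _ => ?_
        by_cases hb : f b = b <;> simp [blockSum, hb]

end Involution

section PairingProduct

variable {α m n R : Type*} [Fintype α] [LinearOrder α] [Fintype n] [CommSemiring R]

def pairingProduct (f : α → α) (x : n → R) (c : Matrix n n R) (i : α → n) : R :=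
  ∏ a, if f a = a then x (i a) else if a < f a then c (i a) (i (f a)) else 1

open Matrix in
theorem Function.Involutive.sum_pairingProduct_mul_prod {f : α → α} (hf : Involutive f)
    (x : n → R) (c : Matrix n n R) (B : Matrix m n R) (j : α → m) :
    ∑ i, pairingProduct f x c i * ∏ a, B (j a) (i a) =
      pairingProduct f (B *ᵥ x) (B * c * Bᵀ) j := by
  have regroup (i : α → n) := hf.prod_eq_prod_pairs fun a => B (j a) (i a)
  simp only [pairingProduct, hf.prod_ite_lt_eq_prod_ite_gt, regroup, ← Finset.prod_mul_distrib,
    hf _]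
  have factor (i : α → n) (a : α) :
      (if f a = a then x (i a) else if f a < a then c (i (f a)) (i a) else 1) *
        (if f a = a then B (j a) (i a)
          else if f a < a then B (j (f a)) (i (f a)) * B (j a) (i a) else 1) =
      if f a = a then x (i a) * B (j a) (i a)
        else if f a < a then c (i (f a)) (i a) * B (j (f a)) (i (f a)) * B (j a) (i a)
        else 1 := by
    split_ifs <;> ring
  simp only [factor]
  rw [hf.sum_prod_pairs (fun a s => x s * B (j a) s)
    fun a s s' => c s s' * B (j (f a)) s * B (j a) s']
  refine Finset.prod_congr rfl fun a _ => ?_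
  split_ifs
  · simp [mulVec, dotProduct, mul_comm]
  · simp only [Matrix.mul_apply, transpose_apply, Finset.sum_mul]
    rw [Finset.sum_comm]
    exact Finset.sum_congr rfl fun _ _ => Finset.sum_congr rfl fun _ _ => by ring
  · rfl

end PairingProduct

theorem hermiteTensor_eq_sum_pairingProduct (d k : ℕ) (x : Fin d → ℝ) (i : Fin k → Fin d) :
    hermiteTensor d k x i = (Real.sqrt (Nat.factorial k))⁻¹ *
      ∑ f ∈ Finset.univ.filter (fun f : Fin k → Fin k => ∀ a, f (f a) = a),
        pairingProduct f x (-1) i := by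
  simp only [hermiteTensor, pairingProduct, Matrix.neg_apply, Matrix.one_apply, neg_ite, neg_zero]

open Matrix in
theorem hermiteTensor_mulVec_of_mul_transpose_eq_one {n r : ℕ} (k : ℕ)
    (B : Matrix (Fin r) (Fin n) ℝ) (hB : B * Bᵀ = 1) (x : Fin n → ℝ) (j : Fin k → Fin r) :
    hermiteTensor r k (B *ᵥ x) j = ∑ i, hermiteTensor n k x i * ∏ a, B (j a) (i a) := by
  have hB' : B * (-1 : Matrix (Fin n) (Fin n) ℝ) * Bᵀ = -1 := by
    rw [Matrix.mul_neg, Matrix.mul_one, Matrix.neg_mul, hB]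
  simp only [hermiteTensor_eq_sum_pairingProduct, mul_assoc, ← Finset.mul_sum, Finset.sum_mul]
  rw [Finset.sum_comm]
  refine congrArg _ (Finset.sum_congr rfl fun f hf => ?_)
  have hf' : Involutive f := (Finset.mem_filter.1 hf).2
  rw [hf'.sum_pairingProduct_mul_prod, hB']

/-- `V` is spanned by the orthonormal family `b` and `W` has the orthonormal basis `e`; both sides
are read in these coordinates, so `Proj_V x` has coordinates `⟪b t, x⟫` and the projection acts on
each tensor slot through the matrix `(⟪b t, e s⟫)`. -/
theorem hermite_tensor_proj {W : Type*} [NormedAddCommGroup W] [InnerProductSpace ℝ W]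
    (n r k : ℕ) (e : OrthonormalBasis (Fin n) ℝ W)
    (b : Fin r → W) (hb : Orthonormal ℝ b) (x : W) (j : Fin k → Fin r) :
    hermiteTensor r k (fun a => (inner ℝ (b a) x : ℝ)) j =
      ∑ i : Fin k → Fin n,
        hermiteTensor n k (fun s => (inner ℝ (e s) x : ℝ)) i *
          ∏ a, (inner ℝ (b (j a)) (e (i a)) : ℝ) := by
  set B : Matrix (Fin r) (Fin n) ℝ := Matrix.of fun t s => inner ℝ (b t) (e s)
  have hBx : B.mulVec (fun s => inner ℝ (e s) x) = fun t => inner ℝ (b t) x :=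
    funext fun t => e.sum_inner_mul_inner (b t) x
  have hBB : B * B.transpose = 1 := by
    ext t t'
    simp only [B, Matrix.mul_apply, Matrix.transpose_apply, Matrix.of_apply,
      fun s => real_inner_comm (e s) (b t'), e.sum_inner_mul_inner, Matrix.one_apply]
    exact orthonormal_iff_ite.1 hb t t'
  rw [← hBx]
  exact hermiteTensor_mulVec_of_mul_transpose_eq_one k B hBB _ j
end

section
/- Coefficient bound for hook-type Schur polynomials at 1: for λ the partition with λ_1 = t−k+1 followed by (k−1−a) ones and then zeros (0 ≤ a ≤ k−1, t ≥ k), the sum of the coefficients of s_λ in k variables satisfies s_λ(1,1,…,1) ≤ binom(t, k−1)·(2k)^{k−1−a}. -/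
/-- The hook-type partition with `λ_1 = t−k+1`, followed by `k−1−a` ones and then zeros. -/
def hookPartition (k t a : ℕ) : Fin k → ℕ :=
  fun j => if (j : ℕ) = 0 then t - k + 1 else if (j : ℕ) ≤ k - 1 - a then 1 else 0

/-!
Evaluating the bialternant identity at `x = (1, q, …, q^{k-1})` turns both determinants into
Vandermonde products; letting `q → 1` gives Weyl's dimension formula
`s_λ(1,…,1) = ∏_{j < j'} (1 + (λ_j - λ_{j'}) / (j' - j))`. For antitone `λ`, dropping
`λ_{j'}` bounds the factors of row `j` by
`∏_{d=1}^{k-1-j} (1 + λ_j / d) = binom(λ_j + k-1-j, k-1-j)`. For the hook, row `0`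
contributes `binom(t, k-1)`, each row with `λ_j = 1` contributes `k - j ≤ 2k`, and the
remaining rows contribute `1`.
-/

open Filter Finset Topology

lemma tendsto_pow_sub_pow_div_sub_one (m n : ℕ) :
    Tendsto (fun q : ℝ => (q ^ m - q ^ n) / (q - 1)) (𝓝[≠] 1) (𝓝 ((m : ℝ) - n)) := by
  have hderiv : HasDerivAt (fun q : ℝ => q ^ m - q ^ n) ((m : ℝ) - n) 1 :=
    ((hasDerivAt_pow m 1).sub (hasDerivAt_pow n 1)).congr_deriv (by simp)
  refine (hasDerivAt_iff_tendsto_slope.mp hderiv).congr fun q => ?_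
  simp [slope_def_field]

lemma tendsto_pow_sub_pow_div_pow_sub_pow {m m' n n' : ℕ} (h : n' ≠ n) :
    Tendsto (fun q : ℝ => (q ^ m' - q ^ m) / (q ^ n' - q ^ n)) (𝓝[≠] 1)
      (𝓝 (((m' : ℝ) - m) / ((n' : ℝ) - n))) := by
  have hne : (n' : ℝ) - n ≠ 0 := sub_ne_zero.mpr (mod_cast h)
  refine ((tendsto_pow_sub_pow_div_sub_one m' m).div
    (tendsto_pow_sub_pow_div_sub_one n' n) hne).congr' ?_
  filter_upwards [self_mem_nhdsWithin] with q (hq : q ≠ 1)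
  exact div_div_div_cancel_right₀ (sub_ne_zero.mpr hq) _ _

lemma det_of_geom_pow {k : ℕ} (q : ℝ) (e : Fin k → ℕ) :
    (Matrix.of fun i j : Fin k => (q ^ (i : ℕ)) ^ e j).det =
      ∏ j : Fin k, ∏ j' ∈ Ioi j, (q ^ e j' - q ^ e j) := by
  rw [← Matrix.det_transpose, ← Matrix.det_vandermonde]
  congr 1
  ext j i
  simp [Matrix.vandermonde, ← pow_mul, mul_comm]

theorem eval_one_eq_prod_of_mul_det_eq {k : ℕ} {e μ : Fin k → ℕ} (he : e.Injective)
    {p : MvPolynomial (Fin k) ℝ}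
    (hp : ∀ x : Fin k → ℝ, MvPolynomial.eval x p * (Matrix.of fun i j => x i ^ e j).det =
      (Matrix.of fun i j => x i ^ μ j).det) :
    MvPolynomial.eval (fun _ => (1 : ℝ)) p =
      ∏ j : Fin k, ∏ j' ∈ Ioi j, (((μ j' : ℝ) - μ j) / ((e j' : ℝ) - e j)) := by
  have hpair : ∀ j, ∀ j' ∈ Ioi j, e j' ≠ e j := fun j j' hj' =>
    he.ne (mem_Ioi.mp hj').ne'
  have hgeom : ∀ᶠ q in 𝓝[>] (1 : ℝ),
      MvPolynomial.eval (fun i : Fin k => q ^ (i : ℕ)) p =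
        ∏ j : Fin k, ∏ j' ∈ Ioi j, ((q ^ μ j' - q ^ μ j) / (q ^ e j' - q ^ e j)) := by
    filter_upwards [self_mem_nhdsWithin] with q (hq : 1 < q)
    have hV : ∏ j : Fin k, ∏ j' ∈ Ioi j, (q ^ e j' - q ^ e j) ≠ 0 :=
      prod_ne_zero_iff.mpr fun j _ => prod_ne_zero_iff.mpr fun j' hj' =>
        sub_ne_zero.mpr <|
          (pow_right_injective₀ (zero_lt_one.trans hq) hq.ne').ne (hpair j j' hj')
    have h := hp fun i => q ^ (i : ℕ)
    rw [det_of_geom_pow, det_of_geom_pow] at h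
    simp only [prod_div_distrib]
    exact eq_div_of_mul_eq hV h
  have hratio : Tendsto
      (fun q : ℝ => ∏ j : Fin k, ∏ j' ∈ Ioi j, ((q ^ μ j' - q ^ μ j) / (q ^ e j' - q ^ e j)))
      (𝓝[>] 1) (𝓝 (∏ j : Fin k, ∏ j' ∈ Ioi j, (((μ j' : ℝ) - μ j) / ((e j' : ℝ) - e j)))) :=
    tendsto_finsetProd _ fun j _ => tendsto_finsetProd _ fun j' hj' =>
      (tendsto_pow_sub_pow_div_pow_sub_pow (hpair j j' hj')).mono_left (nhdsGT_le_nhdsNE 1)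
  have hcont : Tendsto (fun q : ℝ => MvPolynomial.eval (fun i : Fin k => q ^ (i : ℕ)) p)
      (𝓝[>] 1) (𝓝 (MvPolynomial.eval (fun _ => (1 : ℝ)) p)) := by
    have hc : Continuous fun q : ℝ => MvPolynomial.eval (fun i : Fin k => q ^ (i : ℕ)) p :=
      (MvPolynomial.continuous_eval p).comp (continuous_pi fun i => continuous_pow _)
    simpa using (hc.tendsto 1).mono_left nhdsWithin_le_nhds
  exact tendsto_nhds_unique hcont (hratio.congr' (EventuallyEq.symm hgeom))

lemma natCast_sub_one_sub_val {k : ℕ} (j : Fin k) :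
    ((k - 1 - (j : ℕ) : ℕ) : ℝ) = k - 1 - j := by
  have := j.isLt
  rw [Nat.cast_sub (by omega), Nat.cast_pred (by omega)]

theorem eval_one_eq_prod_one_add_div {k : ℕ} {l : Fin k → ℕ} {p : MvPolynomial (Fin k) ℝ}
    (hp : ∀ x : Fin k → ℝ,
      MvPolynomial.eval x p * (Matrix.of fun i j : Fin k => x i ^ (k - 1 - (j : ℕ))).det =
        (Matrix.of fun i j : Fin k => x i ^ (l j + (k - 1 - (j : ℕ)))).det) :
    MvPolynomial.eval (fun _ => (1 : ℝ)) p =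
      ∏ j : Fin k, ∏ j' ∈ Ioi j, (1 + ((l j : ℝ) - l j') / ((j' : ℝ) - j)) := by
  have he : (fun j : Fin k => k - 1 - (j : ℕ)).Injective := fun j j' h => by
    have := j.isLt; have := j'.isLt; ext; simp only at h; omega
  rw [eval_one_eq_prod_of_mul_det_eq he hp]
  refine prod_congr rfl fun j _ => prod_congr rfl fun j' hj' => ?_
  have hlt : (j : ℝ) < j' := mod_cast mem_Ioi.mp hj'
  push_cast [natCast_sub_one_sub_val]
  rw [show (k : ℝ) - 1 - j' - (k - 1 - j) = -((j' : ℝ) - j) by ring]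
  field_simp [(sub_pos.mpr hlt).ne']
  ring

lemma prod_range_one_add_div_succ (c m : ℕ) :
    ∏ i ∈ range m, (1 + (c : ℝ) / (i + 1)) = (c + m).choose m := by
  induction m with
  | zero => simp
  | succ m ih =>
    have key :
        ((c + m + 1 : ℕ) : ℝ) * (c + m).choose m = (c + m + 1).choose (m + 1) * (m + 1) :=
      mod_cast Nat.add_one_mul_choose_eq (c + m) m
    rw [prod_range_succ, ih, ← add_assoc]
    apply mul_right_cancel₀ (show (m : ℝ) + 1 ≠ 0 by positivity)
    rw [← key]
    push_cast
    field_simp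
    ring

section Antitone

variable {k : ℕ} {l : Fin k → ℕ}

lemma one_le_one_add_sub_div (hl : Antitone l) {j j' : Fin k} (h : j < j') :
    1 ≤ 1 + ((l j : ℝ) - l j') / ((j' : ℝ) - j) :=
  le_add_of_nonneg_right <| div_nonneg (sub_nonneg.mpr (mod_cast hl h.le))
    (sub_nonneg.mpr (mod_cast h.le))

lemma prod_Ioi_one_add_div_le_choose (hl : Antitone l) (j : Fin k) :
    ∏ j' ∈ Ioi j, (1 + ((l j : ℝ) - l j') / ((j' : ℝ) - j)) ≤
      (l j + (k - 1 - j)).choose (k - 1 - j) := by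
  calc _ ≤ ∏ j' ∈ Ioi j, (1 + (l j : ℝ) / ((j' : ℝ) - j)) := by
        refine prod_le_prod (fun j' hj' => zero_le_one.trans
          (one_le_one_add_sub_div hl (mem_Ioi.mp hj'))) fun j' hj' => ?_
        have hlt : (j : ℝ) < j' := mod_cast mem_Ioi.mp hj'
        gcongr 1 + ?_ / _
        exact sub_le_self _ (Nat.cast_nonneg _)
    _ = ∏ i ∈ range (k - 1 - j), (1 + (l j : ℝ) / (i + 1)) := by
        have := prod_map (Ioi j) Fin.valEmbedding fun i : ℕ => 1 + (l j : ℝ) / (i - j)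
        simp only [Fin.valEmbedding_apply, Fin.map_valEmbedding_Ioi] at this
        rw [← this, ← Finset.Ico_add_one_left_eq_Ioo, prod_Ico_eq_prod_range,
          show k - (j + 1) = k - 1 - j by omega]
        refine prod_congr rfl fun i _ => ?_
        push_cast
        ring_nf
    _ = _ := prod_range_one_add_div_succ _ _

theorem eval_one_le_prod_choose (hl : Antitone l) {p : MvPolynomial (Fin k) ℝ}
    (hp : ∀ x : Fin k → ℝ,
      MvPolynomial.eval x p * (Matrix.of fun i j : Fin k => x i ^ (k - 1 - (j : ℕ))).det =
        (Matrix.of fun i j : Fin k => x i ^ (l j + (k - 1 - (j : ℕ)))).det) :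
    MvPolynomial.eval (fun _ => (1 : ℝ)) p ≤
      ∏ j : Fin k, ((l j + (k - 1 - j)).choose (k - 1 - j) : ℝ) := by
  rw [eval_one_eq_prod_one_add_div hp]
  exact prod_le_prod (fun j _ => prod_nonneg fun j' hj' => zero_le_one.trans
    (one_le_one_add_sub_div hl (mem_Ioi.mp hj'))) fun j _ => prod_Ioi_one_add_div_le_choose hl j

end Antitone

lemma hookPartition_antitone (k t a : ℕ) : Antitone (hookPartition k t a) := by
  intro j j' h
  have : (j : ℕ) ≤ j' := h
  simp only [hookPartition]
  split_ifs <;> omega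

lemma prod_choose_hookPartition_le {k t : ℕ} (a : ℕ) (ht : k ≤ t) :
    ∏ j : Fin k, (hookPartition k t a j + (k - 1 - j)).choose (k - 1 - j) ≤
      t.choose (k - 1) * (2 * k) ^ (k - 1 - a) := by
  cases k with
  | zero => simp
  | succ n =>
    rw [Fin.prod_univ_succ]
    refine Nat.mul_le_mul (le_of_eq ?_) ?_
    · simp only [hookPartition, Fin.val_zero, if_true]
      congr 1
      omega
    simp only [hookPartition, Fin.val_succ, Nat.add_one_ne_zero, if_false, add_tsub_cancel_right]
    rw [Fin.prod_univ_eq_prod_range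
      (fun i => ((if i + 1 ≤ n - a then 1 else 0) + (n - (i + 1))).choose (n - (i + 1))),
      ← prod_range_mul_prod_Ico _ (Nat.sub_le n a), ← mul_one ((2 * (n + 1)) ^ (n - a))]
    refine Nat.mul_le_mul ?_ (le_of_eq (prod_eq_one fun i hi => ?_))
    · refine (prod_le_pow_card _ _ _ fun i hi => ?_).trans_eq (by rw [card_range])
      have hi : i < n - a := mem_range.mp hi
      rw [if_pos (by omega), add_comm, Nat.choose_succ_self_right]
      omega
    · have hi : n - a ≤ i := (mem_Ico.mp hi).1
      rw [if_neg (by omega), zero_add, Nat.choose_self]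

theorem hook_schur_ones_bound_general (k t a : ℕ) (ht : k ≤ t)
    (p : MvPolynomial (Fin k) ℝ)
    (hp : ∀ x : Fin k → ℝ,
      MvPolynomial.eval x p *
          Matrix.det (Matrix.of fun i j : Fin k => x i ^ (k - 1 - (j : ℕ))) =
        Matrix.det (Matrix.of fun i j : Fin k =>
          x i ^ (hookPartition k t a j + (k - 1 - (j : ℕ))))) :
    MvPolynomial.eval (fun _ => (1 : ℝ)) p ≤
      (Nat.choose t (k - 1) : ℝ) * (2 * k : ℝ) ^ (k - 1 - a) :=
  (eval_one_le_prod_choose (hookPartition_antitone k t a) hp).trans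
    (mod_cast prod_choose_hookPartition_le a ht)

/-- Coefficient bound for hook-type Schur polynomials at the all-ones point:
`s_λ(1,…,1) ≤ binom(t, k−1)·(2k)^{k−1−a}` for `λ = hookPartition k t a`, `0 ≤ a ≤ k−1`,
`t ≥ k`.  Here `s_λ` is any polynomial `p` satisfying the bialternant identity
`p(x) · det([x_i^{k−j}]) = det([x_i^{λ_j+k−j}])` for all `x ∈ ℝ^k` (this determines `p`
uniquely, since the Vandermonde determinant vanishes only on a nowhere-dense set);
since the coefficients of `s_λ` are non-negative, its value at `(1,…,1)` is the sum of the
absolute values of its coefficients. -/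
theorem hook_schur_ones_bound (k t a : ℕ) (hk : 0 < k) (ha : a ≤ k - 1) (ht : k ≤ t)
    (p : MvPolynomial (Fin k) ℝ)
    (hp : ∀ x : Fin k → ℝ,
      MvPolynomial.eval x p *
          Matrix.det (Matrix.of fun i j : Fin k => x i ^ (k - 1 - (j : ℕ))) =
        Matrix.det (Matrix.of fun i j : Fin k =>
          x i ^ (hookPartition k t a j + (k - 1 - (j : ℕ))))) :
    MvPolynomial.eval (fun _ => (1 : ℝ)) p ≤
      (Nat.choose t (k - 1) : ℝ) * (2 * k : ℝ) ^ (k - 1 - a) :=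
  hook_schur_ones_bound_general k t a ht p hp
end

section
/- Scalar moment comparison: let w_1,…,w_k ∈ ℝ and x_1,…,x_k ∈ ℝ with |x_i| ≤ 1, and set M_t = Σ_{i=1}^k w_i x_i^t. Then for every t ≥ k, |M_t| ≤ binom(t, k−1)·(2k)^k · max_{0 ≤ s < k} |M_s|. -/
/-!
Newton interpolation at the nodes `x₀, …, x_{k-1}`: at each node,
`y ^ t = ∑_{s<k} h_{t-s}(x₀, …, x_s) ∏_{j<s} (y - x_j)`, where the divided difference `h_{t-s}` is a
complete homogeneous polynomial, of absolute value at most `choose t s` on `[-1, 1]`. Expanding the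
Newton basis polynomial `∏_{j<s} (y - x_j)` one factor at a time shows that its weighted sum
`∑ w_i ∏_{j<s} (x_i - x_j)` is at most `2 ^ s · max_{s<k} |M_s|`. Hence
`|M_t| ≤ ∑_{s<k} choose t s · 2 ^ s · max |M_s| ≤ choose t (k-1) · 3 ^ (k-1) · max |M_s|`.
-/

open Finset

/-- The coefficient of the Newton basis polynomial `∏_{j<s} (y - z j)` in `y ^ t`: the recursion comes
from `y = (y - z s) + z s`, and `newtonCoeff z t s` is the complete homogeneous polynomial of degree
`t - s` in `z 0, …, z s`. -/
def newtonCoeff {R : Type*} [CommRing R] (z : ℕ → R) : ℕ → ℕ → R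
  | 0, s => if s = 0 then 1 else 0
  | t + 1, 0 => z 0 * newtonCoeff z t 0
  | t + 1, s + 1 => newtonCoeff z t s + z (s + 1) * newtonCoeff z t (s + 1)

theorem pow_eq_sum_newtonCoeff_mul_prod {R : Type*} [CommRing R] (z : ℕ → R) {n : ℕ} {y : R}
    (hy : ∏ j ∈ range n, (y - z j) = 0) (t : ℕ) :
    y ^ t = ∑ s ∈ range n, newtonCoeff z t s * ∏ j ∈ range s, (y - z j) := by
  obtain _ | n := n
  · rw [prod_range_zero] at hy
    rw [← mul_one (y ^ t), hy, mul_zero, sum_range_zero]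
  induction t with
  | zero => simp [newtonCoeff]
  | succ t ih =>
    have hmul (s : ℕ) : y * ∏ j ∈ range s, (y - z j)
        = ∏ j ∈ range (s + 1), (y - z j) + z s * ∏ j ∈ range s, (y - z j) := by
      rw [prod_range_succ]; ring
    calc y ^ (t + 1)
        = ∑ s ∈ range (n + 1), newtonCoeff z t s * ∏ j ∈ range (s + 1), (y - z j)
          + ∑ s ∈ range (n + 1), z s * newtonCoeff z t s * ∏ j ∈ range s, (y - z j) := by
          rw [pow_succ', ih, mul_sum, ← sum_add_distrib]
          refine sum_congr rfl fun s _ => ?_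
          rw [mul_left_comm, hmul]; ring
      _ = _ := by
          rw [sum_range_succ _ n, hy, mul_zero, add_zero, sum_range_succ' _ n,
            sum_range_succ' _ n]
          simp only [newtonCoeff, add_mul, sum_add_distrib, range_zero, prod_empty]
          ring

theorem abs_newtonCoeff_le {z : ℕ → ℝ} (hz : ∀ j, |z j| ≤ 1) :
    ∀ t s, |newtonCoeff z t s| ≤ t.choose s
  | 0, s => by cases s <;> simp [newtonCoeff]
  | t + 1, 0 => by
    simpa [newtonCoeff, abs_mul] using
      mul_le_mul (hz 0) (abs_newtonCoeff_le hz t 0) (abs_nonneg _) zero_le_one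
  | t + 1, s + 1 => by
    rw [newtonCoeff, Nat.choose_succ_succ', Nat.cast_add]
    calc _ ≤ |newtonCoeff z t s| + |z (s + 1)| * |newtonCoeff z t (s + 1)| := by
          rw [← abs_mul]; exact abs_add_le _ _
      _ ≤ t.choose s + 1 * t.choose (s + 1) := by
          gcongr
          · exact abs_newtonCoeff_le hz t s
          · exact hz _
          · exact abs_newtonCoeff_le hz t (s + 1)
      _ = _ := by rw [one_mul]

theorem abs_sum_mul_pow_mul_prod_sub_le {ι : Type*} [Fintype ι] (w x : ι → ℝ) {z : ℕ → ℝ}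
    (hz : ∀ j, |z j| ≤ 1) {n : ℕ} {C : ℝ} (hM : ∀ j < n, |∑ i, w i * x i ^ j| ≤ C) (s : ℕ) :
    ∀ j, j + s < n → |∑ i, w i * x i ^ j * ∏ l ∈ range s, (x i - z l)| ≤ 2 ^ s * C := by
  induction s with
  | zero => simpa using hM
  | succ s ih =>
    intro j hj
    have hsplit : ∑ i, w i * x i ^ j * ∏ l ∈ range (s + 1), (x i - z l)
        = ∑ i, w i * x i ^ (j + 1) * ∏ l ∈ range s, (x i - z l)
          - z s * ∑ i, w i * x i ^ j * ∏ l ∈ range s, (x i - z l) := by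
      rw [mul_sum, ← sum_sub_distrib]
      refine sum_congr rfl fun i _ => ?_
      rw [prod_range_succ]; ring
    calc _ ≤ |∑ i, w i * x i ^ (j + 1) * ∏ l ∈ range s, (x i - z l)|
          + |z s| * |∑ i, w i * x i ^ j * ∏ l ∈ range s, (x i - z l)| := by
          rw [hsplit, ← abs_mul]; exact abs_sub _ _
      _ ≤ 2 ^ s * C + 1 * (2 ^ s * C) := by
          gcongr
          · exact ih (j + 1) (by omega)
          · exact hz s
          · exact ih j (by omega)
      _ = 2 ^ (s + 1) * C := by ring

theorem abs_sum_mul_pow_le_of_abs_moments_le {ι : Type*} [Fintype ι] (w x : ι → ℝ)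
    {z : ℕ → ℝ} (hz : ∀ j, |z j| ≤ 1) {n : ℕ} (hx : ∀ i, ∏ j ∈ range n, (x i - z j) = 0)
    {C : ℝ} (hM : ∀ j < n, |∑ i, w i * x i ^ j| ≤ C) (t : ℕ) :
    |∑ i, w i * x i ^ t| ≤ (∑ s ∈ range n, (t.choose s * 2 ^ s : ℝ)) * C := by
  have hnewton : ∑ i, w i * x i ^ t = ∑ s ∈ range n,
      newtonCoeff z t s * ∑ i, w i * x i ^ 0 * ∏ j ∈ range s, (x i - z j) := by
    simp_rw [pow_eq_sum_newtonCoeff_mul_prod z (hx _) t, mul_sum]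
    rw [sum_comm]
    refine sum_congr rfl fun s _ => sum_congr rfl fun i _ => ?_
    ring
  rw [hnewton, sum_mul]
  refine (abs_sum_le_sum_abs _ _).trans (sum_le_sum fun s hs => ?_)
  rw [abs_mul, mul_assoc]
  exact mul_le_mul (abs_newtonCoeff_le hz t s)
    (abs_sum_mul_pow_mul_prod_sub_le w x hz hM s 0 (by simpa using hs))
    (abs_nonneg _) (Nat.cast_nonneg _)

theorem sum_range_choose_mul_two_pow_le {t k : ℕ} (hk : k ≤ t + 1) :
    ∑ s ∈ range k, t.choose s * 2 ^ s ≤ t.choose (k - 1) * 3 ^ (k - 1) := by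
  obtain _ | m := k
  · simp
  rw [Nat.add_sub_cancel, show 3 = 2 + 1 from rfl, add_pow, mul_sum]
  refine sum_le_sum fun s hs => ?_
  have hsm : s ≤ m := Nat.lt_succ_iff.mp (mem_range.mp hs)
  have hchoose : t.choose s ≤ t.choose m * m.choose s := by
    rw [Nat.choose_mul hsm]
    exact Nat.le_mul_of_pos_right _ (Nat.choose_pos (by omega))
  calc t.choose s * 2 ^ s ≤ t.choose m * m.choose s * 2 ^ s := by gcongr
    _ = _ := by rw [one_pow, mul_one, Nat.cast_id]; ring

theorem three_pow_pred_le_two_mul_pow (k : ℕ) : 3 ^ (k - 1) ≤ (2 * k) ^ k := by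
  obtain _ | _ | m := k
  · simp
  · simp
  calc 3 ^ (m + 1) ≤ (2 * (m + 2)) ^ (m + 1) := Nat.pow_le_pow_left (by omega) _
    _ ≤ (2 * (m + 2)) ^ (m + 2) := Nat.pow_le_pow_right (by omega) (by omega)

/-- Scalar moment comparison: if `M_t = Σ_{i=1}^k w_i x_i^t` with `|x_i| ≤ 1`, then for
`t ≥ k`, `|M_t| ≤ binom(t, k−1)·(2k)^k · max_{0 ≤ s < k} |M_s|`. -/
theorem scalar_moment_comparison (k : ℕ) (hk : 0 < k) (w x : Fin k → ℝ)
    (hx : ∀ i, |x i| ≤ 1) (t : ℕ) (ht : k ≤ t) :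
    |∑ i, w i * x i ^ t| ≤
      (Nat.choose t (k - 1) : ℝ) * (2 * k : ℝ) ^ k *
        (Finset.range k).sup' (Finset.nonempty_range_iff.mpr hk.ne')
          (fun s => |∑ i, w i * x i ^ s|) := by
  set C := (range k).sup' (nonempty_range_iff.mpr hk.ne') fun s => |∑ i, w i * x i ^ s|
  have hM (j : ℕ) (hj : j < k) : |∑ i, w i * x i ^ j| ≤ C := 
    le_sup' (fun s => |∑ i, w i * x i ^ s|) (mem_range.mpr hj)
  have hC : 0 ≤ C := (abs_nonneg _).trans (hM 0 hk)
  set z : ℕ → ℝ := fun j => if h : j < k then x ⟨j, h⟩ else 0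
  have hz (j : ℕ) : |z j| ≤ 1 := by
    by_cases h : j < k <;> simp [z, h, hx]
  have hroot (i : Fin k) : ∏ j ∈ range k, (x i - z j) = 0 :=
    prod_eq_zero (mem_range.mpr i.2) (by simp [z])
  calc |∑ i, w i * x i ^ t| ≤ (∑ s ∈ range k, (t.choose s * 2 ^ s : ℝ)) * C :=
        abs_sum_mul_pow_le_of_abs_moments_le w x hz hroot hM t
    _ ≤ (t.choose (k - 1) * 3 ^ (k - 1) : ℕ) * C := by
        gcongr
        exact_mod_cast sum_range_choose_mul_two_pow_le (by omega)
    _ ≤ (t.choose (k - 1) : ℝ) * (2 * k : ℝ) ^ k * C := by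
        push_cast
        gcongr (t.choose (k - 1) : ℝ) * ?_ * C
        exact_mod_cast three_pow_pred_le_two_mul_pow k
end

section
/- Tensor moment comparison: let V be a finite-dimensional inner product space, w_1,…,w_k ∈ ℝ, and v_1,…,v_k ∈ V with ‖v_i‖ ≤ 1. Define M_t = Σ_{i=1}^k w_i v_i^{⊗t} ∈ V^{⊗t}. Then for every t ≥ k, ‖M_t‖_2 ≤ binom(t, k−1)·(2k)^k · max_{0 ≤ s < k} ‖M_s‖_2, where ‖·‖_2 is the norm induced on V^{⊗t} by the inner product of V. -/
/-!
Fix `j` and put `x_l = ⟪v_l, v_j⟫`. Every `z = ⟪v_i, v_j⟫` is one of the `k` nodes `x_l`, so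
Newton interpolation of `z ↦ z ^ t` at these nodes is exact: `z ^ t` is a sum over `s < k` of
`h_{t-s}(x_s, …, x_0) ∏_{l<s} (z - x_l)`, where `h` is the complete homogeneous symmetric
polynomial. Substitute this into `‖M_t‖² = Σ_{i,j} w_i w_j ⟪v_i, v_j⟫ ^ t`. Expanding `h_{t-s}` into
its `C(t, s)` monomials and the product into its `2 ^ s` terms writes `‖M_t‖²` as a sum of pairings
`⟪u_1 ⊗ ⋯ ⊗ u_m ⊗ M_a, M_t⟫` with `a < k` and `‖u_r‖ ≤ 1`. By Cauchy–Schwarz each is at most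
`‖M_a‖ ‖M_t‖`. Hence `‖M_t‖ ≤ Σ_{s<k} 2 ^ s C(t, s) · max_{a<k} ‖M_a‖`, and
`C(t, s) ≤ C(t, k-1) C(k-1, s)` bounds the sum by `3 ^ (k-1) C(t, k-1)`.
-/

open RealInnerProductSpace

/-- The norm `‖M_t‖₂ = ‖Σ_i w_i v_i^{⊗t}‖₂` of the `t`-th moment tensor in `V^{⊗t}`, where
`V^{⊗t}` carries the inner product induced by that of `V` (so that
`⟨v^{⊗t}, u^{⊗t}⟩ = ⟨v,u⟩^t`); by expanding, `‖M_t‖₂² = Σ_{i,j} w_i w_j ⟨v_i, v_j⟩^t`. -/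
noncomputable def momentTensorNorm {V : Type*} [NormedAddCommGroup V]
    [InnerProductSpace ℝ V] (k : ℕ) (w : Fin k → ℝ) (v : Fin k → V) (t : ℕ) : ℝ :=
  Real.sqrt (∑ i, ∑ j, w i * w j * ⟪v i, v j⟫ ^ t)

section CompleteHomogeneous

variable {R : Type*} [CommRing R]

def completeHomogeneous : List R → ℕ → R
  | _, 0 => 1
  | [], _ + 1 => 0
  | y :: S, c + 1 => completeHomogeneous S (c + 1) + y * completeHomogeneous (y :: S) c

@[simp]
lemma completeHomogeneous_zero (L : List R) : completeHomogeneous L 0 = 1 := by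
  rw [completeHomogeneous]

lemma completeHomogeneous_nil_succ (c : ℕ) : completeHomogeneous ([] : List R) (c + 1) = 0 := by
  rw [completeHomogeneous]

lemma completeHomogeneous_cons_succ (y : R) (S : List R) (c : ℕ) :
    completeHomogeneous (y :: S) (c + 1) =
      completeHomogeneous S (c + 1) + y * completeHomogeneous (y :: S) c := by
  rw [completeHomogeneous]

lemma completeHomogeneous_singleton (z : R) (c : ℕ) : completeHomogeneous [z] c = z ^ c := by
  induction c with
  | zero => simp
  | succ c ih =>
    rw [completeHomogeneous_cons_succ, completeHomogeneous_nil_succ, ih, zero_add, pow_succ,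
      mul_comm]

lemma completeHomogeneous_cons_sub_cons (z y : R) (S : List R) (c : ℕ) :
    completeHomogeneous (z :: S) (c + 1) - completeHomogeneous (y :: S) (c + 1) =
      (z - y) * completeHomogeneous (z :: y :: S) c := by
  induction c with
  | zero => simp only [completeHomogeneous_cons_succ, completeHomogeneous_zero]; ring
  | succ c ih =>
    rw [completeHomogeneous_cons_succ z S (c + 1), completeHomogeneous_cons_succ y S (c + 1),
      completeHomogeneous_cons_succ z (y :: S) c]
    linear_combination z * ih

def newtonSum (t : ℕ) (z : R) : List R → R
  | [] => 0
  | y :: S => newtonSum t z S + completeHomogeneous (y :: S) (t - S.length) * (S.map (z - ·)).prod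

theorem pow_eq_newtonSum_add (z : R) {t : ℕ} :
    ∀ L : List R, L.length ≤ t → z ^ t = newtonSum t z L +
      completeHomogeneous (z :: L) (t - L.length) * (L.map (z - ·)).prod
  | [], _ => by simp [newtonSum, completeHomogeneous_singleton]
  | y :: S, hL => by
    obtain ⟨c, hc⟩ : ∃ c, t - S.length = c + 1 := ⟨t - S.length - 1, by simp at hL; omega⟩
    have hc' : t - (y :: S).length = c := by simp; omega
    rw [pow_eq_newtonSum_add z S (by simp at hL; omega), newtonSum, hc, hc', List.map_cons,
      List.prod_cons]
    linear_combination (S.map (z - ·)).prod * completeHomogeneous_cons_sub_cons z y S c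

theorem pow_eq_newtonSum {z : R} {t : ℕ} {L : List R} (hz : z ∈ L) (hL : L.length ≤ t) :
    z ^ t = newtonSum t z L := by
  rw [pow_eq_newtonSum_add z L hL, List.prod_eq_zero (List.mem_map.2 ⟨z, hz, sub_self z⟩),
    mul_zero, add_zero]

end CompleteHomogeneous

/-- `completeHomogeneous L c` is a sum of `multichoose L.length c` monomials, each a product of `c`
entries of `L`. -/
theorem abs_sum_mul_completeHomogeneous_le {J α : Type*} [Fintype J] (a : J → ℝ)
    (f : α → J → ℝ) {n : ℕ} {B : ℝ}
    (hB : ∀ E : List α, E.length = n → |∑ j, a j * (E.map (f · j)).prod| ≤ B) :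
    ∀ (L : List α) (c : ℕ) (E : List α), E.length + c = n →
      |∑ j, a j * (E.map (f · j)).prod * completeHomogeneous (L.map (f · j)) c| ≤
        Nat.multichoose L.length c * B
  | _, 0, E, hE => by simpa using hB E hE
  | [], c + 1, E, _ => by simp [completeHomogeneous_nil_succ]
  | y :: S, c + 1, E, hE => by
    have split (j : J) : a j * (E.map (f · j)).prod *
        completeHomogeneous ((y :: S).map (f · j)) (c + 1) =
        a j * (E.map (f · j)).prod * completeHomogeneous (S.map (f · j)) (c + 1) +
        a j * ((y :: E).map (f · j)).prod * completeHomogeneous ((y :: S).map (f · j)) c := by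
      rw [List.map_cons, completeHomogeneous_cons_succ, List.map_cons, List.prod_cons]
      ring
    simp only [split, Finset.sum_add_distrib]
    calc _ ≤ _ := abs_add_le _ _
      _ ≤ Nat.multichoose S.length (c + 1) * B + Nat.multichoose (S.length + 1) c * B :=
          add_le_add (abs_sum_mul_completeHomogeneous_le a f hB S (c + 1) E hE)
            (abs_sum_mul_completeHomogeneous_le a f hB (y :: S) c (y :: E) (by simp; omega))
      _ = _ := by rw [List.length_cons, Nat.multichoose_succ_succ]; push_cast; ring

lemma Nat.multichoose_succ_sub_eq_choose {s t : ℕ} (h : s ≤ t) :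
    Nat.multichoose (s + 1) (t - s) = t.choose s := by
  rw [Nat.multichoose_eq, show s + 1 + (t - s) - 1 = t by omega, Nat.choose_symm h]

theorem Nat.sum_range_succ_two_pow_mul_choose_le {n t : ℕ} (h : n ≤ t) :
    ∑ s ∈ Finset.range (n + 1), 2 ^ s * t.choose s ≤ 3 ^ n * t.choose n := by
  have choose_le (s : ℕ) (hs : s ∈ Finset.range (n + 1)) :
      t.choose s ≤ t.choose n * n.choose s := by
    have hsn : s ≤ n := Nat.lt_succ_iff.1 (Finset.mem_range.1 hs)
    rw [Nat.choose_mul hsn]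
    exact Nat.le_mul_of_pos_right _ (Nat.choose_pos (by omega))
  calc ∑ s ∈ Finset.range (n + 1), 2 ^ s * t.choose s
      ≤ ∑ s ∈ Finset.range (n + 1), 2 ^ s * (t.choose n * n.choose s) :=
        Finset.sum_le_sum fun s hs => Nat.mul_le_mul_left _ (choose_le s hs)
    _ = 3 ^ n * t.choose n := by
        rw [show 3 = 2 + 1 by rfl, add_pow, Finset.sum_mul]
        refine Finset.sum_congr rfl fun s _ => ?_
        rw [one_pow, Nat.cast_id]
        ring

theorem Nat.sum_range_two_pow_mul_choose_le {k t : ℕ} (hk : 0 < k) (ht : k - 1 ≤ t) :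
    ∑ s ∈ Finset.range k, 2 ^ s * t.choose s ≤ t.choose (k - 1) * (2 * k) ^ k := by
  obtain ⟨n, rfl⟩ := Nat.exists_eq_add_of_lt hk
  have three_pow_le : 3 ^ n ≤ (2 * (n + 1)) ^ (n + 1) := by
    rcases n with _ | n
    · norm_num
    · calc 3 ^ (n + 1) ≤ (2 * (n + 1 + 1)) ^ (n + 1) := Nat.pow_le_pow_left (by omega) _
        _ ≤ _ := Nat.pow_le_pow_right (by omega) (by omega)
  rw [zero_add, Nat.add_sub_cancel, mul_comm (t.choose n)]
  exact (Nat.sum_range_succ_two_pow_mul_choose_le (by omega)).trans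
    (Nat.mul_le_mul_right _ three_pow_le)

section TensorCoordinates

variable {V ι : Type*} [NormedAddCommGroup V] [InnerProductSpace ℝ V] [Fintype ι]

/-- The coordinates of `u 0 ⊗ ⋯ ⊗ u (n - 1) ∈ V^{⊗n}` in the `n`-fold product of the basis `b`. -/
noncomputable def tensorCoords (b : OrthonormalBasis ι ℝ V) {n : ℕ} (u : Fin n → V) :
    EuclideanSpace ℝ (Fin n → ι) :=
  WithLp.toLp 2 fun g => ∏ r, b.repr (u r) (g r)

lemma inner_tensorCoords (b : OrthonormalBasis ι ℝ V) {n : ℕ} (u u' : Fin n → V) :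
    ⟪tensorCoords b u, tensorCoords b u'⟫ = ∏ r, ⟪u r, u' r⟫ := by
  classical
  simp only [tensorCoords, PiLp.inner_apply, RCLike.inner_apply, conj_trivial,
    ← Finset.prod_mul_distrib]
  rw [← Fintype.prod_sum (fun r p => b.repr (u' r) p * b.repr (u r) p)]
  refine Finset.prod_congr rfl fun r _ => ?_
  rw [← b.sum_inner_mul_inner]
  simp only [b.repr_apply_apply, real_inner_comm (b _) (u r)]
  exact Finset.sum_congr rfl fun p _ => mul_comm _ _

lemma inner_sum_smul_tensorCoords (b : OrthonormalBasis ι ℝ V) {κ κ' : Type*} [Fintype κ]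
    [Fintype κ'] {n : ℕ} (c : κ → ℝ) (u : κ → Fin n → V) (c' : κ' → ℝ) (u' : κ' → Fin n → V) :
    ⟪∑ i, c i • tensorCoords b (u i), ∑ j, c' j • tensorCoords b (u' j)⟫ =
      ∑ i, ∑ j, c i * c' j * ∏ r, ⟪u i r, u' j r⟫ := by
  rw [sum_inner]
  refine Finset.sum_congr rfl fun i _ => ?_
  rw [real_inner_smul_left, inner_sum, Finset.mul_sum]
  refine Finset.sum_congr rfl fun j _ => ?_
  rw [real_inner_smul_right, inner_tensorCoords, mul_assoc]

lemma momentTensorNorm_eq_norm_sum_smul_tensorCoords (b : OrthonormalBasis ι ℝ V) {k : ℕ}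
    (w : Fin k → ℝ) (v : Fin k → V) (t : ℕ) :
    momentTensorNorm k w v t = ‖∑ i, w i • tensorCoords b (fun _ : Fin t => v i)‖ := by
  rw [norm_eq_sqrt_real_inner, inner_sum_smul_tensorCoords, momentTensorNorm]
  simp only [Finset.prod_const, Finset.card_univ, Fintype.card_fin]

lemma norm_sum_smul_tensorCoords_append_le (b : OrthonormalBasis ι ℝ V) {k : ℕ} (w : Fin k → ℝ)
    (v : Fin k → V) (a : ℕ) {n : ℕ} (e : Fin n → V) (he : ∀ r, ‖e r‖ ≤ 1) :
    ‖∑ i, w i • tensorCoords b (Fin.append (fun _ : Fin a => v i) e)‖ ≤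
      momentTensorNorm k w v a := by
  rw [momentTensorNorm_eq_norm_sum_smul_tensorCoords b]
  set P := ∏ r, ⟪e r, e r⟫
  have hP : P ≤ 1 := Finset.prod_le_one (fun _ _ => real_inner_self_nonneg) fun r _ => by
    rw [real_inner_self_eq_norm_sq]
    exact pow_le_one₀ (norm_nonneg _) (he r)
  have norm_sq_eq : ‖∑ i, w i • tensorCoords b (Fin.append (fun _ : Fin a => v i) e)‖ ^ 2 =
      P * ‖∑ i, w i • tensorCoords b (fun _ : Fin a => v i)‖ ^ 2 := by
    simp only [← real_inner_self_eq_norm_sq, inner_sum_smul_tensorCoords, Fin.prod_univ_add,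
      Fin.append_left, Fin.append_right, Finset.mul_sum]
    exact Finset.sum_congr rfl fun i _ => Finset.sum_congr rfl fun j _ => by ring
  refine (pow_le_pow_iff_left₀ (norm_nonneg _) (norm_nonneg _) two_ne_zero).1 ?_
  rw [norm_sq_eq]
  exact mul_le_of_le_one_left (sq_nonneg _) hP

end TensorCoordinates

section Moments

variable {V : Type*} [NormedAddCommGroup V] [InnerProductSpace ℝ V] [FiniteDimensional ℝ V]
  {k : ℕ} (w : Fin k → ℝ) (v : Fin k → V)

lemma momentTensorNorm_sq (t : ℕ) :
    momentTensorNorm k w v t ^ 2 = ∑ i, ∑ j, w i * w j * ⟪v i, v j⟫ ^ t := by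
  rw [momentTensorNorm_eq_norm_sum_smul_tensorCoords (stdOrthonormalBasis ℝ V),
    ← real_inner_self_eq_norm_sq, inner_sum_smul_tensorCoords]
  simp only [Finset.prod_const, Finset.card_univ, Fintype.card_fin]

/-- The sum is `⟪M_a ⊗ v_{E_1} ⊗ ⋯ ⊗ v_{E_m}, M_{a+m}⟫`, so this is Cauchy–Schwarz. -/
theorem abs_sum_mul_prod_inner_le (hv : ∀ i, ‖v i‖ ≤ 1) (E : List (Fin k)) (a : ℕ) :
    |∑ j, w j * (∑ i, w i * ⟪v i, v j⟫ ^ a) * (E.map fun l => ⟪v l, v j⟫).prod| ≤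
      momentTensorNorm k w v a * momentTensorNorm k w v (a + E.length) := by
  set b := stdOrthonormalBasis ℝ V
  set e : Fin E.length → V := fun r => v E[r.1]
  set A := ∑ i, w i • tensorCoords b (Fin.append (fun _ : Fin a => v i) e)
  have inner_A : ⟪A, ∑ j, w j • tensorCoords b (fun _ => v j)⟫ =
      ∑ j, w j * (∑ i, w i * ⟪v i, v j⟫ ^ a) * (E.map fun l => ⟪v l, v j⟫).prod := by
    rw [inner_sum_smul_tensorCoords, Finset.sum_comm]
    refine Finset.sum_congr rfl fun j _ => ?_
    rw [Finset.mul_sum, Finset.sum_mul, ← List.ofFn_getElem_eq_map, List.prod_ofFn]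
    refine Finset.sum_congr rfl fun i _ => ?_
    simp only [Fin.prod_univ_add, Fin.append_left, Fin.append_right, Finset.prod_const,
      Finset.card_univ, Fintype.card_fin, e]
    ring
  calc _ = |⟪A, ∑ j, w j • tensorCoords b (fun _ => v j)⟫| := by rw [inner_A]
    _ ≤ ‖A‖ * ‖∑ j, w j • tensorCoords b (fun _ : Fin (a + E.length) => v j)‖ :=
        abs_real_inner_le_norm _ _
    _ ≤ _ := by
        rw [← momentTensorNorm_eq_norm_sum_smul_tensorCoords]
        exact mul_le_mul_of_nonneg_right
          (norm_sum_smul_tensorCoords_append_le b w v a e fun r => hv _) (Real.sqrt_nonneg _)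

/-- Each factor `⟪v_i, v_j⟫ - ⟪v_l, v_j⟫` splits into a power of `⟪v_i, v_j⟫` and a factor
`⟪v_l, v_j⟫` of the monomial in `j`, giving `2 ^ S.length` terms. -/
theorem abs_sum_mul_prod_sub_inner_le (hv : ∀ i, ‖v i‖ ≤ 1) {M : ℝ} :
    ∀ (S E : List (Fin k)) (a : ℕ), (∀ s ≤ a + S.length, momentTensorNorm k w v s ≤ M) →
      |∑ j, w j * (∑ i, w i * ⟪v i, v j⟫ ^ a *
          (S.map fun l => ⟪v i, v j⟫ - ⟪v l, v j⟫).prod) * (E.map fun l => ⟪v l, v j⟫).prod| ≤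
        2 ^ S.length * M * momentTensorNorm k w v (a + S.length + E.length)
  | [], E, a, hM => by
    simpa using (abs_sum_mul_prod_inner_le w v hv E a).trans
      (mul_le_mul_of_nonneg_right (hM a (by simp)) (Real.sqrt_nonneg _))
  | l :: S, E, a, hM => by
    have split : ∑ j, w j * (∑ i, w i * ⟪v i, v j⟫ ^ a *
        ((l :: S).map fun l => ⟪v i, v j⟫ - ⟪v l, v j⟫).prod) * (E.map fun l => ⟪v l, v j⟫).prod =
        ∑ j, w j * (∑ i, w i * ⟪v i, v j⟫ ^ (a + 1) *
          (S.map fun l => ⟪v i, v j⟫ - ⟪v l, v j⟫).prod) * (E.map fun l => ⟪v l, v j⟫).prod -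
        ∑ j, w j * (∑ i, w i * ⟪v i, v j⟫ ^ a *
          (S.map fun l => ⟪v i, v j⟫ - ⟪v l, v j⟫).prod) *
            ((l :: E).map fun l => ⟪v l, v j⟫).prod := by
      rw [← Finset.sum_sub_distrib]
      refine Finset.sum_congr rfl fun j _ => ?_
      simp only [List.map_cons, List.prod_cons, Finset.sum_mul, Finset.mul_sum,
        ← Finset.sum_sub_distrib]
      refine Finset.sum_congr rfl fun i _ => ?_
      ring
    have h₁ := abs_sum_mul_prod_sub_inner_le hv S E (a + 1) fun s hs => hM s (by simp; omega)
    have h₂ := abs_sum_mul_prod_sub_inner_le hv S (l :: E) a fun s hs => hM s (by simp; omega)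
    rw [show a + 1 + S.length + E.length = a + (S.length + 1) + E.length by omega] at h₁
    rw [show a + S.length + (l :: E).length = a + (S.length + 1) + E.length by simp; omega] at h₂
    rw [split, List.length_cons, pow_succ]
    linarith [(abs_sub _ _).trans (add_le_add h₁ h₂)]

theorem abs_sum_newtonSum_le (hv : ∀ i, ‖v i‖ ≤ 1) {t : ℕ} {M : ℝ} :
    ∀ S : List (Fin k), S.length ≤ t → (∀ s < S.length, momentTensorNorm k w v s ≤ M) →
      |∑ j, w j * ∑ i, w i * newtonSum t ⟪v i, v j⟫ (S.map fun l => ⟪v l, v j⟫)| ≤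
        (∑ s ∈ Finset.range S.length, 2 ^ s * t.choose s : ℝ) * M * momentTensorNorm k w v t
  | [], _, _ => by simp [newtonSum]
  | l :: S, hS, hM => by
    have hSt : S.length ≤ t := by simp at hS; omega
    have last_term := abs_sum_mul_completeHomogeneous_le
      (fun j => w j * ∑ i, w i * ⟪v i, v j⟫ ^ 0 * (S.map fun l => ⟪v i, v j⟫ - ⟪v l, v j⟫).prod)
      (fun l j => ⟪v l, v j⟫) (n := t - S.length)
      (B := 2 ^ S.length * M * momentTensorNorm k w v t) (fun E hE => by
        have := abs_sum_mul_prod_sub_inner_le w v hv S E 0 fun s hs => hM s (by simp; omega)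
        rwa [show 0 + S.length + E.length = t by omega] at this)
      (l :: S) (t - S.length) [] (zero_add _)
    rw [List.length_cons, Nat.multichoose_succ_sub_eq_choose hSt] at last_term
    have split : ∑ j, w j * ∑ i, w i * newtonSum t ⟪v i, v j⟫ ((l :: S).map fun l => ⟪v l, v j⟫) =
        ∑ j, w j * ∑ i, w i * newtonSum t ⟪v i, v j⟫ (S.map fun l => ⟪v l, v j⟫) +
        ∑ j, w j * (∑ i, w i * ⟪v i, v j⟫ ^ 0 * (S.map fun l => ⟪v i, v j⟫ - ⟪v l, v j⟫).prod) *
          (([] : List (Fin k)).map fun l => ⟪v l, v j⟫).prod *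
          completeHomogeneous ((l :: S).map fun l => ⟪v l, v j⟫) (t - S.length) := by
      rw [← Finset.sum_add_distrib]
      refine Finset.sum_congr rfl fun j _ => ?_
      simp only [List.map_cons, newtonSum, List.length_map, List.map_map, List.map_nil,
        List.prod_nil, pow_zero, mul_add, Finset.sum_add_distrib, Finset.mul_sum, Finset.sum_mul]
      congr 1
      refine Finset.sum_congr rfl fun i _ => ?_
      simp only [Function.comp_def]
      ring
    rw [split, List.length_cons, Finset.sum_range_succ]
    calc _ ≤ _ := abs_add_le _ _
      _ ≤ _ := add_le_add (abs_sum_newtonSum_le hv S hSt fun s hs => hM s (by simp; omega))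
          last_term
      _ = _ := by ring

theorem momentTensorNorm_le_sum_two_pow_mul_choose_mul (hv : ∀ i, ‖v i‖ ≤ 1) {t : ℕ}
    (ht : k ≤ t) {M : ℝ} (hM0 : 0 ≤ M) (hM : ∀ s < k, momentTensorNorm k w v s ≤ M) :
    momentTensorNorm k w v t ≤ (∑ s ∈ Finset.range k, 2 ^ s * t.choose s : ℝ) * M := by
  have bound := abs_sum_newtonSum_le w v hv (List.finRange k) (by simpa) (by simpa using hM)
  rw [List.length_finRange] at bound
  have norm_sq_le : momentTensorNorm k w v t ^ 2 ≤
      (∑ s ∈ Finset.range k, 2 ^ s * t.choose s : ℝ) * M * momentTensorNorm k w v t := by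
    refine le_trans (le_of_eq ?_) ((le_abs_self _).trans bound)
    rw [momentTensorNorm_sq, Finset.sum_comm]
    refine Finset.sum_congr rfl fun j _ => ?_
    rw [Finset.mul_sum]
    refine Finset.sum_congr rfl fun i _ => ?_
    rw [← pow_eq_newtonSum (L := (List.finRange k).map fun l => ⟪v l, v j⟫)
      (List.mem_map.2 ⟨i, List.mem_finRange i, rfl⟩) (by simpa)]
    ring
  have hC : 0 ≤ (∑ s ∈ Finset.range k, 2 ^ s * t.choose s : ℝ) * M :=
    mul_nonneg (Finset.sum_nonneg fun _ _ => by positivity) hM0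
  have hm : 0 ≤ momentTensorNorm k w v t := Real.sqrt_nonneg _
  nlinarith

end Moments

/-- Tensor moment comparison: for a finite-dimensional inner product space `V`,
`w_i ∈ ℝ`, `v_i ∈ V` with `‖v_i‖ ≤ 1`, and `M_t = Σ_i w_i v_i^{⊗t} ∈ V^{⊗t}`: for `t ≥ k`,
`‖M_t‖₂ ≤ binom(t, k−1)·(2k)^k · max_{0 ≤ s < k} ‖M_s‖₂`. -/
theorem tensor_moment_comparison {V : Type*} [NormedAddCommGroup V] [InnerProductSpace ℝ V]
    [FiniteDimensional ℝ V] (k : ℕ) (hk : 0 < k) (w : Fin k → ℝ) (v : Fin k → V)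
    (hv : ∀ i, ‖v i‖ ≤ 1) (t : ℕ) (ht : k ≤ t) :
    momentTensorNorm k w v t ≤
      (Nat.choose t (k - 1) : ℝ) * (2 * k : ℝ) ^ k *
        (Finset.range k).sup' (Finset.nonempty_range_iff.mpr hk.ne')
          (fun s => momentTensorNorm k w v s) := by
  set M := (Finset.range k).sup' _ fun s => momentTensorNorm k w v s
  have hM (s : ℕ) (hs : s < k) : momentTensorNorm k w v s ≤ M :=
    Finset.le_sup' (fun s => momentTensorNorm k w v s) (Finset.mem_range.2 hs)
  have hM0 : 0 ≤ M := (Real.sqrt_nonneg _).trans (hM 0 hk)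
  have hsum : (∑ s ∈ Finset.range k, 2 ^ s * t.choose s : ℝ) ≤ t.choose (k - 1) * (2 * k) ^ k := by
    exact_mod_cast Nat.sum_range_two_pow_mul_choose_le hk (by omega)
  exact (momentTensorNorm_le_sum_two_pow_mul_choose_mul w v hv ht hM0 hM).trans
    (mul_le_mul_of_nonneg_right hsum hM0)
end
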